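/- arXiv:1709.02340 — 5 statements merged into one kernel-verified Lean document; each statement's English description precedes it below -/
import Mathlib

section
/- (S-Procedure, complex version.) For i = 1, 2, let f_i(x) = xᴴ A_i x + 2 Re(b_iᴴ x) + c_i, where A_i is an n×n Hermitian complex matrix, b_i ∈ ℂⁿ, and c_i ∈ ℝ. Suppose there exists a point x̂ ∈ ℂⁿ with f₁(x̂) < 0. Then the implication (for all x ∈ ℂⁿ, f₁(x) ≤ 0 implies f₂(x) ≤ 0) holds if and only if there exists μ ≥ 0 such that the (n+1)×(n+1) Hermitian block matrix μ·[[A₁, b₁],[b₁ᴴ, c₁]] − [[A₂, b₂],[b₂ᴴ, c₂]] is positive semidefinite. -/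
open Matrix ComplexOrder

namespace SProc
set_option linter.unusedSectionVars false
variable {ι : Type*} [Fintype ι]

noncomputable def Qf (M : Matrix ι ι ℂ) (z : ι → ℂ) : ℝ := (star z ⬝ᵥ M *ᵥ z).re

lemma swap_eq {M : Matrix ι ι ℂ} (hM : M.IsHermitian) (z w : ι → ℂ) :
    star w ⬝ᵥ M *ᵥ z = star (star z ⬝ᵥ M *ᵥ w) := by
  conv_rhs => rw [star_dotProduct, star_star]
  rw [star_mulVec, hM.eq, ← dotProduct_mulVec]

lemma herm_im {M : Matrix ι ι ℂ} (hM : M.IsHermitian) (z : ι → ℂ) :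
    (star z ⬝ᵥ M *ᵥ z).im = 0 := by
  have h := swap_eq hM z z
  exact Complex.conj_eq_iff_im.mp (by rw [← Complex.star_def]; exact h.symm)

lemma Qf_csmul (M : Matrix ι ι ℂ) (ζ : ℂ) (v : ι → ℂ) :
    Qf M (ζ • v) = Complex.normSq ζ * Qf M v := by
  simp only [Qf, star_smul, mulVec_smul, smul_dotProduct, dotProduct_smul, smul_eq_mul,
    star_trivial]
  rw [← mul_assoc, show ζ * star ζ = (Complex.normSq ζ : ℂ) by
    rw [Complex.star_def, Complex.mul_conj], Complex.re_ofReal_mul]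

lemma Qf_expand {M : Matrix ι ι ℂ} (hM : M.IsHermitian) (t s : ℝ) (z w : ι → ℂ) :
    Qf M ((t:ℂ) • z + (s:ℂ) • w)
      = t^2 * Qf M z + s^2 * Qf M w + 2*t*s*(star z ⬝ᵥ M *ᵥ w).re := by
  simp only [Qf, star_add, star_smul, mulVec_add, mulVec_smul, add_dotProduct,
    smul_dotProduct, dotProduct_add, dotProduct_smul, smul_eq_mul, star_trivial,
    Complex.star_def, Complex.conj_ofReal]
  rw [swap_eq hM z w]
  simp only [Complex.add_re, Complex.mul_re, Complex.ofReal_re, Complex.ofReal_im,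
    Complex.conj_re, Complex.conj_im, Complex.star_def]
  ring

lemma Qf_comb (a b : ℝ) (M₁ M₂ : Matrix ι ι ℂ) (z : ι → ℂ) :
    Qf ((a:ℂ) • M₁ + (b:ℂ) • M₂) z = a * Qf M₁ z + b * Qf M₂ z := by
  simp only [Qf, add_mulVec, smul_mulVec, dotProduct_add, dotProduct_smul,
    smul_eq_mul, Complex.add_re, Complex.re_ofReal_mul]

lemma Qf_zero (M : Matrix ι ι ℂ) : Qf M 0 = 0 := by
  simp [Qf]

lemma Qf_neg (M : Matrix ι ι ℂ) (v : ι → ℂ) : Qf M (-v) = Qf M v := by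
  have := Qf_csmul M (-1) v
  simpa using this

lemma Qf_rsmul (M : Matrix ι ι ℂ) (t : ℝ) (v : ι → ℂ) :
    Qf M ((t:ℂ) • v) = t^2 * Qf M v := by
  rw [Qf_csmul, Complex.normSq_ofReal, sq]

lemma comb_mem_uIcc {a b x y : ℝ} (ha : 0 ≤ a) (hb : 0 ≤ b) (hab : a + b = 1) :
    a * x + b * y ∈ Set.uIcc x y := by
  have hx : a * x + b * x = x := by
    have : (a + b) * x = 1 * x := by rw [hab]
    linarith [this]
  have hy : a * y + b * y = y := by
    have : (a + b) * y = 1 * y := by rw [hab]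
    linarith [this]
  rcases le_total x y with h | h
  · rw [Set.uIcc_of_le h, Set.mem_Icc]
    constructor
    · have := mul_le_mul_of_nonneg_left h hb; linarith
    · have := mul_le_mul_of_nonneg_left h ha; linarith
  · rw [Set.uIcc_of_ge h, Set.mem_Icc]
    constructor
    · have := mul_le_mul_of_nonneg_left h ha; linarith
    · have := mul_le_mul_of_nonneg_left h hb; linarith

/-- Dines core: equal second form values. -/
lemma dines_core {M₁ M₂ : Matrix ι ι ℂ} (h₁ : M₁.IsHermitian) (h₂ : M₂.IsHermitian)
    (z w : ι → ℂ) (hb : Qf M₂ z = Qf M₂ w) {a b : ℝ} (ha : 0 ≤ a) (hb' : 0 ≤ b)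
    (hab : a + b = 1) :
    ∃ v, Qf M₁ v = a * Qf M₁ z + b * Qf M₁ w ∧ Qf M₂ v = Qf M₂ z := by
  by_cases hB0 : Qf M₂ z = 0
  · -- path through scalings of z or w
    have hsub : a * Qf M₁ z + b * Qf M₁ w ∈ Set.uIcc (Qf M₁ z) 0 ∪ Set.uIcc 0 (Qf M₁ w) := by
      apply Set.uIcc_subset_uIcc_union_uIcc
      simpa [add_comm] using comb_mem_uIcc ha hb' hab
    rcases hsub with hT | hT
    · have hcont : ContinuousOn (fun t : ℝ => t^2 * Qf M₁ z) (Set.uIcc 1 0) := by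
        fun_prop
      have h2 := intermediate_value_uIcc hcont
      simp only [one_pow, one_mul, ne_eq, OfNat.ofNat_ne_zero, not_false_eq_true,
        zero_pow, zero_mul] at h2
      obtain ⟨t, -, ht⟩ := h2 hT
      refine ⟨(t:ℂ) • z, ?_, ?_⟩
      · rw [Qf_rsmul]; exact ht
      · rw [Qf_rsmul, hB0, mul_zero]
    · have hcont : ContinuousOn (fun t : ℝ => t^2 * Qf M₁ w) (Set.uIcc 0 1) := by
        fun_prop
      have h2 := intermediate_value_uIcc hcont
      simp only [one_pow, one_mul, ne_eq, OfNat.ofNat_ne_zero, not_false_eq_true,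
        zero_pow, zero_mul] at h2
      obtain ⟨t, -, ht⟩ := h2 hT
      refine ⟨(t:ℂ) • w, ?_, ?_⟩
      · rw [Qf_rsmul]; exact ht
      · rw [Qf_rsmul, ← hb, hB0, mul_zero]
  · -- Qf M₂ z ≠ 0 : flip sign of w so that B * β ≥ 0
    obtain ⟨w', hw1, hw2, hβ⟩ : ∃ w', Qf M₁ w' = Qf M₁ w ∧ Qf M₂ w' = Qf M₂ w ∧
        0 ≤ Qf M₂ z * (star z ⬝ᵥ M₂ *ᵥ w').re := by
      rcases le_total 0 (Qf M₂ z * (star z ⬝ᵥ M₂ *ᵥ w).re) with h | h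
      · exact ⟨w, rfl, rfl, h⟩
      · refine ⟨-w, Qf_neg _ _, Qf_neg _ _, ?_⟩
        rw [mulVec_neg, dotProduct_neg, Complex.neg_re, mul_neg]
        linarith
    set B := Qf M₂ z with hBdef
    set β := (star z ⬝ᵥ M₂ *ᵥ w').re with hβdef
    set c := β / B with hcdef
    have hc0 : 0 ≤ c := by
      have h9 : c = (B*β)/B^2 := by rw [hcdef, div_eq_div_iff hB0 (pow_ne_zero 2 hB0)]; ring
      rw [h9]; exact div_nonneg hβ (sq_nonneg B)
    have hβc : β = c * B := by rw [hcdef, div_mul_cancel₀ _ hB0]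
    set s : ℝ → ℝ := fun t => -c*t + Real.sqrt ((c^2-1)*t^2+1) with hsdef
    have hin : ∀ t ∈ Set.Icc (0:ℝ) 1, 0 ≤ (c^2-1)*t^2+1 := by
      intro t ht
      nlinarith [ht.1, ht.2, sq_nonneg (c*t)]
    have key : ∀ t ∈ Set.Icc (0:ℝ) 1, t^2 + (s t)^2 + 2*c*t*(s t) = 1 := by
      intro t ht
      have h8 := Real.sq_sqrt (hin t ht)
      have h7 : s t + c*t = Real.sqrt ((c^2-1)*t^2+1) := by rw [hsdef]; ring
      linear_combination h8 + (s t + c * t + Real.sqrt ((c ^ 2 - 1) * t ^ 2 + 1)) * h7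
    have hs0 : s 0 = 1 := by simp [hsdef]
    have hs1 : s 1 = 0 := by
      have : (c^2-1)*1^2+1 = c^2 := by ring
      simp only [hsdef, this, Real.sqrt_sq hc0, mul_one]; ring
    set g : ℝ → ℝ := fun t =>
      t^2 * Qf M₁ z + (s t)^2 * Qf M₁ w' + 2*t*(s t)*(star z ⬝ᵥ M₁ *ᵥ w').re with hgdef
    have h6 : Continuous fun t : ℝ => (c^2-1)*t^2+1 := by fun_prop
    have hscont : Continuous s := by
      rw [hsdef]
      exact (continuous_const.mul continuous_id).add (Real.continuous_sqrt.comp h6)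
    have hgcont : ContinuousOn g (Set.uIcc 1 0) := by
      apply Continuous.continuousOn
      rw [hgdef]
      exact (((continuous_pow 2).mul continuous_const).add
        ((hscont.pow 2).mul continuous_const)).add
        ((((continuous_const.mul continuous_id).mul hscont)).mul continuous_const)
    have h2 := intermediate_value_uIcc hgcont
    have hg1 : g 1 = Qf M₁ z := by simp [hgdef, hs1]
    have hg0 : g 0 = Qf M₁ w := by simp [hgdef, hs0, hw1]
    have hT : a * Qf M₁ z + b * Qf M₁ w ∈ Set.uIcc (g 1) (g 0) := by
      rw [hg1, hg0]; exact comb_mem_uIcc ha hb' hab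
    obtain ⟨t, htmem, htg⟩ := h2 hT
    have htI : t ∈ Set.Icc (0:ℝ) 1 := by
      rwa [Set.uIcc_comm, Set.uIcc_of_le zero_le_one] at htmem
    refine ⟨(t:ℂ) • z + ((s t : ℝ):ℂ) • w', ?_, ?_⟩
    · rw [Qf_expand h₁]; exact htg
    · rw [Qf_expand h₂, hw2, ← hBdef, ← hβdef, hβc]
      have hk := key t htI
      rw [← hb]
      linear_combination B * hk

lemma herm_comb {M₁ M₂ : Matrix ι ι ℂ} (h₁ : M₁.IsHermitian) (h₂ : M₂.IsHermitian)
    (a b : ℝ) : ((a:ℂ) • M₁ + (b:ℂ) • M₂).IsHermitian := by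
  have : ((a:ℂ) • M₁ + (b:ℂ) • M₂)ᴴ = (a:ℂ) • M₁ + (b:ℂ) • M₂ := by
    simp only [conjTranspose_add, conjTranspose_smul, h₁.eq, h₂.eq,
      Complex.star_def, Complex.conj_ofReal]
  exact this

/-- Dines convexity. -/
lemma dines_main {M₁ M₂ : Matrix ι ι ℂ} (h₁ : M₁.IsHermitian) (h₂ : M₂.IsHermitian)
    (z w : ι → ℂ) {a b : ℝ} (ha : 0 ≤ a) (hb : 0 ≤ b) (hab : a + b = 1) :
    ∃ v, Qf M₁ v = a * Qf M₁ z + b * Qf M₁ w ∧ Qf M₂ v = a * Qf M₂ z + b * Qf M₂ w := by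
  by_cases hpq : Qf M₁ z = Qf M₁ w ∧ Qf M₂ z = Qf M₂ w
  · exact ⟨z, by linear_combination b * hpq.1 - Qf M₁ z * hab,
      by linear_combination b * hpq.2 - Qf M₂ z * hab⟩
  · set d₁ := Qf M₁ z - Qf M₁ w with hd1
    set d₂ := Qf M₂ z - Qf M₂ w with hd2
    have hd : d₁ ≠ 0 ∨ d₂ ≠ 0 := by
      by_contra h
      push_neg at h
      exact hpq ⟨sub_eq_zero.mp h.1, sub_eq_zero.mp h.2⟩
    have hdsq : d₁^2 + d₂^2 ≠ 0 := by
      rcases hd with h | h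
      · positivity
      · positivity
    have hid : -d₂ * Qf M₁ z + d₁ * Qf M₂ z = -d₂ * Qf M₁ w + d₁ * Qf M₂ w := by
      rw [hd1, hd2]; ring
    have heq : Qf (((-d₂ : ℝ):ℂ) • M₁ + (d₁:ℂ) • M₂) z
        = Qf (((-d₂ : ℝ):ℂ) • M₁ + (d₁:ℂ) • M₂) w := by
      rw [Qf_comb, Qf_comb]; exact hid
    obtain ⟨v, hv1, hv2⟩ := dines_core (herm_comb h₁ h₂ d₁ d₂)
      (herm_comb h₁ h₂ (-d₂) d₁) z w heq ha hb hab
    rw [Qf_comb, Qf_comb, Qf_comb] at hv1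
    rw [Qf_comb, Qf_comb] at hv2
    have haux : d₁ * Qf M₁ v + d₂ * Qf M₂ v
        = d₁ * (a * Qf M₁ z + b * Qf M₁ w) + d₂ * (a * Qf M₂ z + b * Qf M₂ w) := by
      linear_combination hv1
    have haux2 : -d₂ * Qf M₁ v + d₁ * Qf M₂ v
        = -d₂ * (a * Qf M₁ z + b * Qf M₁ w) + d₁ * (a * Qf M₂ z + b * Qf M₂ w) := by
      linear_combination hv2 + b * hid - (-d₂ * Qf M₁ z + d₁ * Qf M₂ z) * hab
    refine ⟨v, ?_, ?_⟩
    · have hX : (d₁^2 + d₂^2) * (Qf M₁ v - (a * Qf M₁ z + b * Qf M₁ w)) = 0 := by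
        linear_combination d₁ * haux - d₂ * haux2
      rcases mul_eq_zero.mp hX with h | h
      · exact absurd h hdsq
      · linarith [sub_eq_zero.mp h]
    · have hY : (d₁^2 + d₂^2) * (Qf M₂ v - (a * Qf M₂ z + b * Qf M₂ w)) = 0 := by
        linear_combination d₂ * haux + d₁ * haux2
      rcases mul_eq_zero.mp hY with h | h
      · exact absurd h hdsq
      · linarith [sub_eq_zero.mp h]

/-- Homogeneous S-lemma. -/
lemma homog {M₁ M₂ : Matrix ι ι ℂ} (h₁ : M₁.IsHermitian) (h₂ : M₂.IsHermitian)
    (hslater : ∃ z₀, Qf M₁ z₀ < 0) (h : ∀ z, Qf M₁ z ≤ 0 → Qf M₂ z ≤ 0) :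
    ∃ μ : ℝ, 0 ≤ μ ∧ ∀ z, 0 ≤ μ * Qf M₁ z - Qf M₂ z := by
  obtain ⟨z₀, hz₀⟩ := hslater
  set W : Set (ℝ × ℝ) := Set.range (fun z : ι → ℂ => (Qf M₁ z, Qf M₂ z)) with hW
  have hWconv : Convex ℝ W := by
    rintro p ⟨z, rfl⟩ q ⟨w, rfl⟩ a b ha hb hab
    obtain ⟨v, hv1, hv2⟩ := dines_main h₁ h₂ z w ha hb hab
    exact ⟨v, by simp [Prod.ext_iff, hv1, hv2, Prod.smul_def, smul_eq_mul]⟩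
  set O : Set (ℝ × ℝ) := {p | p.1 < 0 ∧ 0 < p.2} with hO
  have hOopen : IsOpen O :=
    (isOpen_lt continuous_fst continuous_const).inter (isOpen_lt continuous_const continuous_snd)
  have hOconv : Convex ℝ O := by
    rintro p ⟨hp1, hp2⟩ q ⟨hq1, hq2⟩ a b ha hb hab
    constructor
    · have : (a • p + b • q).1 = a * p.1 + b * q.1 := rfl
      rw [this]
      rcases eq_or_lt_of_le ha with h' | h'
      · rw [← h'] at hab ⊢; simp only [zero_mul, zero_add]
        nlinarith
      · nlinarith
    · have : (a • p + b • q).2 = a * p.2 + b * q.2 := rfl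
      rw [this]
      rcases eq_or_lt_of_le ha with h' | h'
      · rw [← h'] at hab ⊢; simp only [zero_mul, zero_add]; nlinarith
      · nlinarith
  have hdisj : Disjoint O W := by
    rw [Set.disjoint_left]
    rintro p ⟨hp1, hp2⟩ ⟨z, rfl⟩
    exact absurd (h z (le_of_lt hp1)) (not_le.mpr hp2)
  obtain ⟨f, u, hfO, hfW⟩ := geometric_hahn_banach_open hOconv hOopen hWconv hdisj
  set α := f (1, 0) with hα
  set β := f (0, 1) with hβ
  have hf : ∀ p : ℝ × ℝ, f p = p.1 * α + p.2 * β := by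
    intro p
    have hp : p = p.1 • ((1:ℝ), (0:ℝ)) + p.2 • ((0:ℝ), (1:ℝ)) := by
      ext <;> simp
    rw [hα, hβ, ← smul_eq_mul, ← smul_eq_mul]
    calc f p = f (p.1 • ((1:ℝ), (0:ℝ)) + p.2 • ((0:ℝ), (1:ℝ))) := by rw [← hp]
    _ = p.1 • f (1, 0) + p.2 • f (0, 1) := by
        rw [map_add, f.map_smul, f.map_smul]
  have h0W : ((0:ℝ), (0:ℝ)) ∈ W := ⟨0, by simp [Qf_zero]⟩
  have hu0 : u ≤ 0 := by
    have := hfW _ h0W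
    rwa [hf, zero_mul, zero_mul, add_zero] at this
  have hOlt : ∀ ε δ : ℝ, 0 < ε → 0 < δ → -ε * α + δ * β < u := by
    intro ε δ hε hδ
    have := hfO (-ε, δ) ⟨by simpa using hε, hδ⟩
    rwa [hf] at this
  have hu0' : 0 ≤ u := by
    by_contra hu
    push_neg at hu
    rcases le_or_gt 0 (β - α) with hba | hba
    · have := hOlt 1 1 one_pos one_pos
      linarith
    · have hpos : 0 < u / (β - α) := div_pos_of_neg_of_neg hu hba
      have := hOlt (u / (β - α)) (u / (β - α)) hpos hpos
      have heq : -(u / (β - α)) * α + (u / (β - α)) * β = u := by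
        have hne : β - α ≠ 0 := ne_of_lt hba
        have hcan : u / (β - α) * (β - α) = u := div_mul_cancel₀ _ hne
        linear_combination hcan
      linarith
  have hα0 : 0 ≤ α := by
    by_contra hc
    push_neg at hc
    have hne : α ≠ 0 := ne_of_lt hc
    set ε := (u - β + 1) / (-α) with hε
    have hne' : -α ≠ 0 := by simpa using hne
    have hεα : -ε * α = u - β + 1 := by
      rw [hε]
      have hcan : (u - β + 1) / (-α) * (-α) = u - β + 1 := div_mul_cancel₀ _ hne'
      linear_combination hcan
    rcases le_or_gt ε 0 with h' | h'
    · -- then u - β + 1 = -εα ≤ 0, use ε' = 1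
      have := hOlt 1 1 one_pos one_pos
      nlinarith [hu0', hεα]
    · have := hOlt ε 1 h' one_pos
      rw [hεα] at this
      linarith
  have hβ0 : β ≤ 0 := by
    by_contra hc
    push_neg at hc
    have hne : β ≠ 0 := ne_of_gt hc
    set δ := (u + α + 1) / β with hδ
    have hδβ : δ * β = u + α + 1 := by
      rw [hδ]
      exact div_mul_cancel₀ _ hne
    rcases le_or_gt δ 0 with h' | h'
    · have := hOlt 1 1 one_pos one_pos
      nlinarith [hδβ]
    · have := hOlt 1 δ one_pos h'
      rw [neg_one_mul] at this
      linarith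
  have hWge : ∀ z, 0 ≤ α * Qf M₁ z + β * Qf M₂ z := by
    intro z
    have := hfW _ ⟨z, rfl⟩
    rw [hf] at this
    simp only at this
    linarith [hu0']
  have hβneg : β < 0 := by
    rcases lt_or_eq_of_le hβ0 with h' | h'
    · exact h'
    · exfalso
      have hα00 : α = 0 := by
        have h2 := hWge z₀
        rw [h', zero_mul, add_zero] at h2
        by_contra hne
        have hgt : 0 < α := lt_of_le_of_ne hα0 (Ne.symm hne)
        nlinarith
      have := hOlt 1 1 one_pos one_pos
      rw [hα00, h'] at this
      simp at this
      linarith [hu0']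
  refine ⟨α / (-β), div_nonneg hα0 (by linarith), ?_⟩
  intro z
  have hz := hWge z
  have : α / (-β) * Qf M₁ z - Qf M₂ z = (α * Qf M₁ z + β * Qf M₂ z) / (-β) := by
    have hne : -β ≠ 0 := by simpa using ne_of_lt hβneg
    rw [eq_div_iff hne]
    have hcan : α / (-β) * (-β) = α := div_mul_cancel₀ _ hne
    linear_combination (Qf M₁ z) * hcan
  rw [this]
  exact div_nonneg hz (by linarith)

noncomputable def Mk {n : ℕ} (A : Matrix (Fin n) (Fin n) ℂ) (b : Fin n → ℂ) (c : ℝ) :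
    Matrix (Fin n ⊕ Fin 1) (Fin n ⊕ Fin 1) ℂ :=
  Matrix.fromBlocks A (Matrix.replicateCol (Fin 1) b) (Matrix.replicateRow (Fin 1) (star b))
    (Matrix.of fun _ _ => (c : ℂ))

lemma Mk_herm {n : ℕ} {A : Matrix (Fin n) (Fin n) ℂ} (hA : A.IsHermitian)
    (b : Fin n → ℂ) (c : ℝ) : (Mk A b c).IsHermitian := by
  have hD : (Matrix.of fun _ _ : Fin 1 => (c:ℂ))ᴴ = Matrix.of fun _ _ : Fin 1 => (c:ℂ) := by
    ext i j
    rw [Matrix.conjTranspose_apply]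
    show star ((c:ℂ)) = (c:ℂ)
    rw [Complex.star_def, Complex.conj_ofReal]
  have : (Mk A b c)ᴴ = Mk A b c := by
    unfold Mk
    rw [fromBlocks_conjTranspose, conjTranspose_replicateCol, conjTranspose_replicateRow, star_star, hA.eq, hD]
  exact this

lemma star_elim {n : ℕ} (x : Fin n → ℂ) (y : Fin 1 → ℂ) :
    star (Sum.elim x y) = Sum.elim (star x) (star y) := by
  funext i
  cases i <;> rfl

lemma Qblock {n : ℕ} (A : Matrix (Fin n) (Fin n) ℂ) (b : Fin n → ℂ) (c : ℝ)
    (x : Fin n → ℂ) (ζ : ℂ) :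
    Qf (Mk A b c) (Sum.elim x (fun _ => ζ))
      = (star x ⬝ᵥ A *ᵥ x).re + 2 * ((starRingEnd ℂ) ζ * (star b ⬝ᵥ x)).re
        + Complex.normSq ζ * c := by
  unfold Qf Mk
  rw [fromBlocks_mulVec, star_elim, sumElim_dotProduct_sumElim]
  have e1 : Sum.elim x (fun _ : Fin 1 => ζ) ∘ Sum.inl = x := rfl
  have e2 : Sum.elim x (fun _ : Fin 1 => ζ) ∘ Sum.inr = fun _ => ζ := rfl
  rw [e1, e2]
  have e3 : Matrix.replicateCol (Fin 1) b *ᵥ (fun _ => ζ) = ζ • b := by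
    funext i
    simp [Matrix.mulVec, dotProduct, Fin.sum_univ_one, mul_comm]
  have e4 : (Matrix.replicateRow (Fin 1) (star b) *ᵥ x) = fun _ : Fin 1 => star b ⬝ᵥ x := by
    funext i
    simp [Matrix.mulVec, dotProduct]
  have e5 : (Matrix.of fun _ _ : Fin 1 => (c:ℂ)) *ᵥ (fun _ => ζ) = fun _ : Fin 1 => c * ζ := by
    funext i
    simp [Matrix.mulVec, dotProduct, Fin.sum_univ_one]
  rw [e3, e4, e5, dotProduct_add, dotProduct_smul]
  have e6 : star x ⬝ᵥ b = star (star b ⬝ᵥ x) := star_dotProduct x b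
  rw [e6]
  have e7 : (star fun _ : Fin 1 => ζ) ⬝ᵥ ((fun _ : Fin 1 => star b ⬝ᵥ x) + fun _ => c * ζ)
      = star ζ * (star b ⬝ᵥ x + c * ζ) := by
    simp [dotProduct, Fin.sum_univ_one, Pi.add_apply]
  rw [e7]
  set q := star x ⬝ᵥ A *ᵥ x
  set W := star b ⬝ᵥ x
  simp only [smul_eq_mul, Complex.add_re, Complex.mul_re, Complex.star_def,
    Complex.conj_re, Complex.conj_im, Complex.ofReal_re, Complex.ofReal_im,
    Complex.add_im, Complex.mul_im, Complex.add_re, Complex.normSq_apply]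
  ring

lemma quad_pos (P C r : ℝ) (hP : 0 < P) :
    ∃ t : ℝ, 0 ≤ t ∧ 0 < C + (t*t)*P + 2*t*r := by
  refine ⟨max 1 ((2*|r| + |C| + 1)/P), le_trans zero_le_one (le_max_left _ _), ?_⟩
  set t := max 1 ((2*|r| + |C| + 1)/P) with ht
  have ht1 : (1:ℝ) ≤ t := le_max_left _ _
  have ht0 : (0:ℝ) ≤ t := by linarith
  have htP : 2*|r| + |C| + 1 ≤ t * P := by
    have h' : (2*|r| + |C| + 1)/P ≤ t := le_max_right _ _
    rw [div_le_iff₀ hP] at h'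
    linarith
  have ha1 : -(2*t*|r|) ≤ 2*t*r := by
    have h2 := mul_le_mul_of_nonneg_left (neg_abs_le r) (by linarith : (0:ℝ) ≤ 2*t)
    have h3 : 2*t*(-|r|) = -(2*t*|r|) := by ring
    linarith
  have ha2 : 1*|C| ≤ t*|C| := mul_le_mul_of_nonneg_right ht1 (abs_nonneg C)
  have ha3 : t*(2*|r| + |C| + 1) ≤ t*(t*P) := mul_le_mul_of_nonneg_left htP ht0
  have hassoc : (t*t)*P = t*(t*P) := by ring
  linarith [neg_abs_le C, ha1, ha2, ha3, ht1, hassoc]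

lemma Qone {n : ℕ} (A : Matrix (Fin n) (Fin n) ℂ) (b : Fin n → ℂ) (c : ℝ) (x : Fin n → ℂ) :
    Qf (Mk A b c) (Sum.elim x (fun _ => (1:ℂ)))
      = (star x ⬝ᵥ A *ᵥ x).re + 2 * (star b ⬝ᵥ x).re + c := by
  rw [Qblock]; simp

lemma Qnil {n : ℕ} (A : Matrix (Fin n) (Fin n) ℂ) (b : Fin n → ℂ) (c : ℝ) (x : Fin n → ℂ) :
    Qf (Mk A b c) (Sum.elim x (fun _ => (0:ℂ))) = (star x ⬝ᵥ A *ᵥ x).re := by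
  rw [Qblock]; simp

lemma hzero {n : ℕ} {A₁ A₂ : Matrix (Fin n) (Fin n) ℂ} (hA₁ : A₁.IsHermitian)
    (hA₂ : A₂.IsHermitian) {b₁ b₂ : Fin n → ℂ} {c₁ c₂ : ℝ}
    (hyp : ∀ x : Fin n → ℂ,
        (star x ⬝ᵥ A₁ *ᵥ x).re + 2 * (star b₁ ⬝ᵥ x).re + c₁ ≤ 0 →
        (star x ⬝ᵥ A₂ *ᵥ x).re + 2 * (star b₂ ⬝ᵥ x).re + c₂ ≤ 0)
    (x₀ : Fin n → ℂ) (hx₀ : (star x₀ ⬝ᵥ A₁ *ᵥ x₀).re + 2 * (star b₁ ⬝ᵥ x₀).re + c₁ < 0)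
    (x : Fin n → ℂ) (hz1 : (star x ⬝ᵥ A₁ *ᵥ x).re ≤ 0) :
    (star x ⬝ᵥ A₂ *ᵥ x).re ≤ 0 := by
  by_contra hP2
  push_neg at hP2
  have hr1 : ∃ σ : ℝ, σ * σ = 1 ∧
      σ * (star (Sum.elim x₀ (fun _ : Fin 1 => (1:ℂ))) ⬝ᵥ
        Mk A₁ b₁ c₁ *ᵥ (Sum.elim x (fun _ : Fin 1 => (0:ℂ)))).re ≤ 0 := by
    rcases le_or_gt ((star (Sum.elim x₀ (fun _ : Fin 1 => (1:ℂ))) ⬝ᵥ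
        Mk A₁ b₁ c₁ *ᵥ (Sum.elim x (fun _ : Fin 1 => (0:ℂ)))).re) 0 with h | h
    · exact ⟨1, by ring, by linarith⟩
    · exact ⟨-1, by ring, by linarith⟩
  obtain ⟨σ, hσsq, hσr⟩ := hr1
  obtain ⟨t, ht0, htpos⟩ := quad_pos ((star x ⬝ᵥ A₂ *ᵥ x).re)
    ((star x₀ ⬝ᵥ A₂ *ᵥ x₀).re + 2 * (star b₂ ⬝ᵥ x₀).re + c₂)
    (σ * (star (Sum.elim x₀ (fun _ : Fin 1 => (1:ℂ))) ⬝ᵥ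
        Mk A₂ b₂ c₂ *ᵥ (Sum.elim x (fun _ : Fin 1 => (0:ℂ)))).re) hP2
  have hvec : ((1:ℝ):ℂ) • (Sum.elim x₀ (fun _ : Fin 1 => (1:ℂ))) +
      ((t*σ:ℝ):ℂ) • (Sum.elim x (fun _ : Fin 1 => (0:ℂ)))
      = Sum.elim (x₀ + ((t*σ:ℝ):ℂ) • x) (fun _ : Fin 1 => (1:ℂ)) := by
    funext i
    rcases i with i | j
    · show 1 * x₀ i + (((t*σ:ℝ)):ℂ) * x i = x₀ i + (((t*σ:ℝ)):ℂ) * x i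
      ring
    · show 1 * 1 + (((t*σ:ℝ)):ℂ) * 0 = 1
      ring
  have e1 := Qf_expand (Mk_herm hA₁ b₁ c₁) 1 (t*σ) (Sum.elim x₀ (fun _ : Fin 1 => (1:ℂ)))
    (Sum.elim x (fun _ : Fin 1 => (0:ℂ)))
  have e2 := Qf_expand (Mk_herm hA₂ b₂ c₂) 1 (t*σ) (Sum.elim x₀ (fun _ : Fin 1 => (1:ℂ)))
    (Sum.elim x (fun _ : Fin 1 => (0:ℂ)))
  rw [hvec, Qone, Qone, Qnil] at e1
  rw [hvec, Qone, Qone, Qnil] at e2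
  have hsq : (t*σ)^2 = t*t := by
    have h4 : (t*σ)^2 = (t*t) * (σ*σ) := by ring
    rw [h4, hσsq, mul_one]
  have hle : (star (x₀ + ((t*σ:ℝ):ℂ) • x) ⬝ᵥ A₁ *ᵥ (x₀ + ((t*σ:ℝ):ℂ) • x)).re
      + 2 * (star b₁ ⬝ᵥ (x₀ + ((t*σ:ℝ):ℂ) • x)).re + c₁ ≤ 0 := by
    rw [e1, hsq]
    have h5 : (t*t) * (star x ⬝ᵥ A₁ *ᵥ x).re ≤ 0 :=
      mul_nonpos_of_nonneg_of_nonpos (mul_nonneg ht0 ht0) hz1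
    have h6 : 2*1*(t*σ) * (star (Sum.elim x₀ (fun _ : Fin 1 => (1:ℂ))) ⬝ᵥ
        Mk A₁ b₁ c₁ *ᵥ (Sum.elim x (fun _ : Fin 1 => (0:ℂ)))).re ≤ 0 := by
      have h7 := mul_le_mul_of_nonneg_left hσr (by linarith : (0:ℝ) ≤ 2*t)
      have h8 : 2*t*(σ * (star (Sum.elim x₀ (fun _ : Fin 1 => (1:ℂ))) ⬝ᵥ
          Mk A₁ b₁ c₁ *ᵥ (Sum.elim x (fun _ : Fin 1 => (0:ℂ)))).re)
          = 2*1*(t*σ) * (star (Sum.elim x₀ (fun _ : Fin 1 => (1:ℂ))) ⬝ᵥ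
          Mk A₁ b₁ c₁ *ᵥ (Sum.elim x (fun _ : Fin 1 => (0:ℂ)))).re := by ring
      rw [h8] at h7
      simpa using h7
    nlinarith [hx₀, h5, h6]
  have hf2 := hyp _ hle
  rw [e2, hsq] at hf2
  have h9 : 2*1*(t*σ) * (star (Sum.elim x₀ (fun _ : Fin 1 => (1:ℂ))) ⬝ᵥ
      Mk A₂ b₂ c₂ *ᵥ (Sum.elim x (fun _ : Fin 1 => (0:ℂ)))).re
      = 2*t*(σ * (star (Sum.elim x₀ (fun _ : Fin 1 => (1:ℂ))) ⬝ᵥ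
      Mk A₂ b₂ c₂ *ᵥ (Sum.elim x (fun _ : Fin 1 => (0:ℂ)))).re) := by ring
  rw [h9] at hf2
  linarith [htpos, hf2]

end SProc

open SProc in
/-- **S-Procedure (complex version).**
For `i = 1, 2`, let `fᵢ(x) = xᴴ Aᵢ x + 2 Re(bᵢᴴ x) + cᵢ`, where `Aᵢ` is an `n × n`
Hermitian complex matrix, `bᵢ ∈ ℂⁿ` and `cᵢ ∈ ℝ`.  Suppose there exists `x0` with
`f₁(x0) < 0`.  Then `(∀ x, f₁(x) ≤ 0 → f₂(x) ≤ 0)` holds if and only if there exists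
`μ ≥ 0` such that `μ • [[A₁, b₁], [b₁ᴴ, c₁]] − [[A₂, b₂], [b₂ᴴ, c₂]]` is positive
semidefinite. -/
theorem s_procedure (n : ℕ)
    (A₁ A₂ : Matrix (Fin n) (Fin n) ℂ) (hA₁ : A₁.IsHermitian) (hA₂ : A₂.IsHermitian)
    (b₁ b₂ : Fin n → ℂ) (c₁ c₂ : ℝ)
    (hslater : ∃ x0 : Fin n → ℂ,
      (star x0 ⬝ᵥ A₁ *ᵥ x0).re + 2 * (star b₁ ⬝ᵥ x0).re + c₁ < 0) :
    (∀ x : Fin n → ℂ,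
        (star x ⬝ᵥ A₁ *ᵥ x).re + 2 * (star b₁ ⬝ᵥ x).re + c₁ ≤ 0 →
        (star x ⬝ᵥ A₂ *ᵥ x).re + 2 * (star b₂ ⬝ᵥ x).re + c₂ ≤ 0) ↔
      ∃ μ : ℝ, 0 ≤ μ ∧
        ((μ : ℂ) • Matrix.fromBlocks A₁ (Matrix.replicateCol (Fin 1) b₁)
            (Matrix.replicateRow (Fin 1) (star b₁)) (Matrix.of fun _ _ => (c₁ : ℂ)) -
          Matrix.fromBlocks A₂ (Matrix.replicateCol (Fin 1) b₂)
            (Matrix.replicateRow (Fin 1) (star b₂)) (Matrix.of fun _ _ => (c₂ : ℂ))).PosSemidef := by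
  obtain ⟨x₀, hx₀⟩ := hslater
  have hM₁h : (Mk A₁ b₁ c₁).IsHermitian := Mk_herm hA₁ b₁ c₁
  have hM₂h : (Mk A₂ b₂ c₂).IsHermitian := Mk_herm hA₂ b₂ c₂
  have hcomb : ∀ μ : ℝ, (μ:ℂ) • Mk A₁ b₁ c₁ - Mk A₂ b₂ c₂
      = ((μ:ℝ):ℂ) • Mk A₁ b₁ c₁ + ((-1:ℝ):ℂ) • Mk A₂ b₂ c₂ := by
    intro μ
    push_cast
    rw [neg_one_smul, sub_eq_add_neg]
  constructor
  · intro hyp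
    -- Step 1: homogenized implication
    have hH : ∀ z : Fin n ⊕ Fin 1 → ℂ, Qf (Mk A₁ b₁ c₁) z ≤ 0 → Qf (Mk A₂ b₂ c₂) z ≤ 0 := by
      intro z hz1
      have hdec : z = Sum.elim (fun i => z (Sum.inl i)) (fun _ : Fin 1 => z (Sum.inr 0)) := by
        funext i
        rcases i with i | j
        · rfl
        · have hj : j = 0 := Subsingleton.elim j 0
          rw [hj]
          rfl
      rw [hdec] at hz1 ⊢
      set x : Fin n → ℂ := fun i => z (Sum.inl i) with hxdef
      set ζ : ℂ := z (Sum.inr 0) with hζdef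
      clear_value x ζ
      by_cases hζ : ζ = 0
      · rw [hζ] at hz1 ⊢
        rw [Qnil] at hz1
        rw [Qnil]
        exact hzero hA₁ hA₂ hyp x₀ hx₀ x hz1
      · have hsc : Sum.elim x (fun _ : Fin 1 => ζ)
            = ζ • Sum.elim (ζ⁻¹ • x) (fun _ : Fin 1 => (1:ℂ)) := by
          funext i
          rcases i with i | j
          · show x i = ζ * (ζ⁻¹ * x i)
            field_simp
          · show ζ = ζ * 1
            ring
        rw [hsc, Qf_csmul] at hz1 ⊢
        have hpos : 0 < Complex.normSq ζ := Complex.normSq_pos.mpr hζ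
        have h1 : Qf (Mk A₁ b₁ c₁) (Sum.elim (ζ⁻¹ • x) (fun _ : Fin 1 => (1:ℂ))) ≤ 0 := by
          nlinarith [hz1, hpos]
        rw [Qone] at h1
        have h2 := hyp _ h1
        rw [← Qone A₂ b₂ c₂] at h2
        nlinarith [h2, hpos]
    -- Step 2: homogeneous S-lemma
    obtain ⟨μ, hμ0, hμall⟩ := homog hM₁h hM₂h
      ⟨Sum.elim x₀ (fun _ : Fin 1 => (1:ℂ)), by rw [Qone]; exact hx₀⟩ hH
    refine ⟨μ, hμ0, ?_⟩
    show ((μ:ℂ) • Mk A₁ b₁ c₁ - Mk A₂ b₂ c₂).PosSemidef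
    have hDh : ((μ:ℂ) • Mk A₁ b₁ c₁ - Mk A₂ b₂ c₂).IsHermitian := by
      rw [hcomb]
      exact herm_comb hM₁h hM₂h μ (-1)
    refine PosSemidef.of_dotProduct_mulVec_nonneg hDh fun z => ?_
    have hre : 0 ≤ (star z ⬝ᵥ ((μ:ℂ) • Mk A₁ b₁ c₁ - Mk A₂ b₂ c₂) *ᵥ z).re := by
      have h3 : (star z ⬝ᵥ ((μ:ℂ) • Mk A₁ b₁ c₁ - Mk A₂ b₂ c₂) *ᵥ z).re
          = Qf ((μ:ℂ) • Mk A₁ b₁ c₁ - Mk A₂ b₂ c₂) z := rfl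
      rw [h3, hcomb, Qf_comb]
      have := hμall z
      linarith
    have him := herm_im hDh z
    rw [Complex.le_def]
    refine ⟨by simpa using hre, ?_⟩
    simp only [Complex.zero_im]
    exact him.symm
  · rintro ⟨μ, hμ0, hpsd⟩ x hx
    have hpsd' : ((μ:ℂ) • Mk A₁ b₁ c₁ - Mk A₂ b₂ c₂).PosSemidef := hpsd
    have hq := hpsd'.dotProduct_mulVec_nonneg (Sum.elim x (fun _ : Fin 1 => (1:ℂ)))
    have hre : 0 ≤ (star (Sum.elim x (fun _ : Fin 1 => (1:ℂ))) ⬝ᵥ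
        ((μ:ℂ) • Mk A₁ b₁ c₁ - Mk A₂ b₂ c₂) *ᵥ (Sum.elim x (fun _ : Fin 1 => (1:ℂ)))).re := by
      have := (Complex.le_def.mp hq).1
      simpa using this
    have h3 : (star (Sum.elim x (fun _ : Fin 1 => (1:ℂ))) ⬝ᵥ
        ((μ:ℂ) • Mk A₁ b₁ c₁ - Mk A₂ b₂ c₂) *ᵥ (Sum.elim x (fun _ : Fin 1 => (1:ℂ)))).re
        = Qf ((μ:ℂ) • Mk A₁ b₁ c₁ - Mk A₂ b₂ c₂) (Sum.elim x (fun _ : Fin 1 => (1:ℂ))) := rfl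
    rw [h3, hcomb, Qf_comb, Qone, Qone] at hre
    nlinarith [hre, hx, hμ0, mul_nonpos_of_nonneg_of_nonpos hμ0 hx]
end

section
/- (Robust SINR lower-bound constraint as an LMI.) Let A be an n×n Hermitian complex matrix, ĥ ∈ ℂⁿ, c ∈ ℝ, and ε > 0. Then ((ĥ + δ)ᴴ A (ĥ + δ) ≥ c holds for every δ ∈ ℂⁿ with ‖δ‖₂ ≤ ε) if and only if there exists μ ≥ 0 such that the (n+1)×(n+1) Hermitian block matrix [[μIₙ + A, Aĥ],[ĥᴴA, ĥᴴAĥ − c − με²]] is positive semidefinite. -/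
open Matrix ComplexOrder

namespace RobustSinrAux

open Complex

variable {n : ℕ}

noncomputable def Lf (A : Matrix (Fin n) (Fin n) ℂ) (x y : Fin n → ℂ) : ℝ :=
  (star x ⬝ᵥ A *ᵥ y).re

lemma herm_swap {A : Matrix (Fin n) (Fin n) ℂ} (hA : A.IsHermitian) (x y : Fin n → ℂ) :
    star x ⬝ᵥ A *ᵥ y = star (A *ᵥ x) ⬝ᵥ y := by
  rw [star_mulVec, hA.eq, dotProduct_mulVec]

lemma herm_conj {A : Matrix (Fin n) (Fin n) ℂ} (hA : A.IsHermitian) (x y : Fin n → ℂ) :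
    star (star x ⬝ᵥ A *ᵥ y) = star y ⬝ᵥ A *ᵥ x := by
  rw [← star_dotProduct, ← herm_swap hA]

lemma herm_im {A : Matrix (Fin n) (Fin n) ℂ} (hA : A.IsHermitian) (x : Fin n → ℂ) :
    (star x ⬝ᵥ A *ᵥ x).im = 0 := by
  have h1 := herm_conj hA x x
  rw [Complex.star_def] at h1
  exact Complex.conj_eq_iff_im.mp h1

lemma Lf_symm {A : Matrix (Fin n) (Fin n) ℂ} (hA : A.IsHermitian) (x y : Fin n → ℂ) :
    Lf A x y = Lf A y x := by
  unfold Lf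
  rw [← herm_conj hA x y, Complex.star_def, Complex.conj_re]

lemma Lf_add_right (A : Matrix (Fin n) (Fin n) ℂ) (x y z : Fin n → ℂ) :
    Lf A x (y + z) = Lf A x y + Lf A x z := by
  unfold Lf; rw [mulVec_add, dotProduct_add, Complex.add_re]

lemma Lf_add_left (A : Matrix (Fin n) (Fin n) ℂ) (x y z : Fin n → ℂ) :
    Lf A (x + y) z = Lf A x z + Lf A y z := by
  unfold Lf; rw [star_add, add_dotProduct, Complex.add_re]

lemma Lf_smul_right (A : Matrix (Fin n) (Fin n) ℂ) (t : ℝ) (x y : Fin n → ℂ) :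
    Lf A x ((t : ℂ) • y) = t * Lf A x y := by
  unfold Lf
  rw [mulVec_smul, dotProduct_smul, smul_eq_mul, Complex.re_ofReal_mul]

lemma Lf_smul_left (A : Matrix (Fin n) (Fin n) ℂ) (t : ℝ) (x y : Fin n → ℂ) :
    Lf A ((t : ℂ) • x) y = t * Lf A x y := by
  unfold Lf
  rw [star_smul, smul_dotProduct, smul_eq_mul, Complex.star_def, Complex.conj_ofReal,
    Complex.re_ofReal_mul]

lemma Lf_add_add {A : Matrix (Fin n) (Fin n) ℂ} (hA : A.IsHermitian) (x y : Fin n → ℂ) :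
    Lf A (x + y) (x + y) = Lf A x x + 2 * Lf A x y + Lf A y y := by
  rw [Lf_add_left, Lf_add_right, Lf_add_right, Lf_symm hA y x]; ring

noncomputable def Pf (x y : Fin n → ℂ) : ℝ := (star x ⬝ᵥ y).re

lemma Pf_eq_Lf (x y : Fin n → ℂ) : Pf x y = Lf 1 x y := by
  unfold Pf Lf; rw [one_mulVec]

lemma Pf_symm (x y : Fin n → ℂ) : Pf x y = Pf y x := by
  rw [Pf_eq_Lf, Pf_eq_Lf]; exact Lf_symm isHermitian_one x y

lemma Pf_add_right (x y z : Fin n → ℂ) : Pf x (y + z) = Pf x y + Pf x z := by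
  rw [Pf_eq_Lf, Pf_eq_Lf, Pf_eq_Lf]; exact Lf_add_right 1 x y z

lemma Pf_add_left (x y z : Fin n → ℂ) : Pf (x + y) z = Pf x z + Pf y z := by
  rw [Pf_eq_Lf, Pf_eq_Lf, Pf_eq_Lf]; exact Lf_add_left 1 x y z

lemma Pf_smul_right (t : ℝ) (x y : Fin n → ℂ) : Pf x ((t : ℂ) • y) = t * Pf x y := by
  rw [Pf_eq_Lf, Pf_eq_Lf]; exact Lf_smul_right 1 t x y

lemma Pf_smul_left (t : ℝ) (x y : Fin n → ℂ) : Pf ((t : ℂ) • x) y = t * Pf x y := by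
  rw [Pf_eq_Lf, Pf_eq_Lf]; exact Lf_smul_left 1 t x y

lemma Pf_add_add (x y : Fin n → ℂ) :
    Pf (x + y) (x + y) = Pf x x + 2 * Pf x y + Pf y y := by
  rw [Pf_eq_Lf, Pf_eq_Lf, Pf_eq_Lf, Pf_eq_Lf]; exact Lf_add_add isHermitian_one x y

lemma Pf_zero_right (x : Fin n → ℂ) : Pf x 0 = 0 := by
  unfold Pf; simp

lemma star_dot_self (x : Fin n → ℂ) :
    star x ⬝ᵥ x = ((∑ i, Complex.normSq (x i) : ℝ) : ℂ) := by
  simp [dotProduct, ← Complex.normSq_eq_conj_mul_self, Complex.star_def]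

lemma Pf_self_nonneg (x : Fin n → ℂ) : 0 ≤ Pf x x := by
  unfold Pf
  rw [star_dot_self, Complex.ofReal_re]
  exact Finset.sum_nonneg fun i _ => Complex.normSq_nonneg _

lemma eq_zero_of_Pf_self_nonpos {x : Fin n → ℂ} (h : Pf x x ≤ 0) : x = 0 := by
  have h0 : Pf x x = 0 := le_antisymm h (Pf_self_nonneg x)
  unfold Pf at h0
  rw [star_dot_self, Complex.ofReal_re] at h0
  have := (Finset.sum_eq_zero_iff_of_nonneg (fun i _ => Complex.normSq_nonneg (x i))).mp h0
  funext i
  exact Complex.normSq_eq_zero.mp (this i (Finset.mem_univ i))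

lemma Lf_eq_Pf {A : Matrix (Fin n) (Fin n) ℂ} (hA : A.IsHermitian) (z w : Fin n → ℂ) :
    Lf A z w = Pf (A *ᵥ z) w := by
  unfold Lf Pf; rw [herm_swap hA]

lemma Pf_norm (δ : EuclideanSpace ℂ (Fin n)) : Pf (δ : Fin n → ℂ) (δ : Fin n → ℂ) = ‖δ‖ ^ 2 := by
  have h1 : (inner ℂ δ δ : ℂ) = (‖δ‖ : ℂ) ^ 2 := inner_self_eq_norm_sq_to_K δ
  have h2 : (inner ℂ δ δ : ℂ) = star (δ : Fin n → ℂ) ⬝ᵥ (δ : Fin n → ℂ) := by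
    rw [PiLp.inner_apply]; simp only [RCLike.inner_apply']; rfl
  unfold Pf
  rw [← h2, h1, ← Complex.ofReal_pow, Complex.ofReal_re]

lemma norm_le_iff {ε : ℝ} (hε : 0 ≤ ε) (δ : EuclideanSpace ℂ (Fin n)) :
    ‖δ‖ ≤ ε ↔ Pf (δ : Fin n → ℂ) (δ : Fin n → ℂ) ≤ ε ^ 2 := by
  rw [Pf_norm]
  exact ⟨fun h => pow_le_pow_left₀ (norm_nonneg _) h 2,
    fun h => le_of_pow_le_pow_left₀ two_ne_zero hε h⟩

lemma nonpos_of_le_poly {a C1 C2 C3 t1 : ℝ} (ht1 : 0 < t1)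
    (H : ∀ t : ℝ, 0 < t → t ≤ t1 → a ≤ t * C1 + t ^ 2 * C2 + t ^ 3 * C3) : a ≤ 0 := by
  have hc : Continuous fun t : ℝ => t * C1 + t ^ 2 * C2 + t ^ 3 * C3 := by continuity
  have tend : Filter.Tendsto (fun t : ℝ => t * C1 + t ^ 2 * C2 + t ^ 3 * C3)
      (nhdsWithin 0 (Set.Ioi 0)) (nhds 0) := by
    have h0 := (hc.tendsto 0).mono_left (nhdsWithin_le_nhds (s := Set.Ioi (0 : ℝ)))
    simpa using h0
  refine ge_of_tendsto tend ?_
  filter_upwards [Ioc_mem_nhdsGT_of_mem (Set.left_mem_Ico.mpr ht1)] with t ht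
  exact H t ht.1 ht.2

lemma cont_F0 (A : Matrix (Fin n) (Fin n) ℂ) (h0 : Fin n → ℂ) :
    Continuous fun δ : Fin n → ℂ => (star (h0 + δ) ⬝ᵥ A *ᵥ (h0 + δ)).re := by
  apply Complex.continuous_re.comp
  simp only [dotProduct, mulVec, Pi.star_apply, Pi.add_apply]
  refine continuous_finset_sum _ fun i _ => ?_
  exact ((continuous_const.add (continuous_apply i)).star).mul
    (continuous_finset_sum _ fun j _ =>
      continuous_const.mul (continuous_const.add (continuous_apply j)))


lemma F_exp {A : Matrix (Fin n) (Fin n) ℂ} (hA : A.IsHermitian) (h0 δm w : Fin n → ℂ) :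
    Lf A (h0 + (δm + w)) (h0 + (δm + w))
      = Lf A (h0 + δm) (h0 + δm) + 2 * Pf (A *ᵥ (h0 + δm)) w + Lf A w w := by
  rw [show h0 + (δm + w) = (h0 + δm) + w from (add_assoc h0 δm w).symm,
    Lf_add_add hA (h0 + δm) w, Lf_eq_Pf hA (h0 + δm) w]

set_option maxHeartbeats 3200000 in
lemma key {A : Matrix (Fin n) (Fin n) ℂ} (hA : A.IsHermitian) (h0 : Fin n → ℂ)
    (c ε : ℝ) (hε : 0 < ε)
    (H : ∀ δ : Fin n → ℂ, Pf δ δ ≤ ε ^ 2 → c ≤ Lf A (h0 + δ) (h0 + δ)) :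
    ∃ μ : ℝ, 0 ≤ μ ∧ (∀ v : Fin n → ℂ, 0 ≤ Lf A v v + μ * Pf v v) ∧
      (∀ δ : Fin n → ℂ, c + μ * (ε ^ 2 - Pf δ δ) ≤ Lf A (h0 + δ) (h0 + δ)) := by
  classical
  set Ee := WithLp.equiv 2 (Fin n → ℂ) with hEe
  have hGc : Continuous fun δ : EuclideanSpace ℂ (Fin n) => Lf A (h0 + Ee δ) (h0 + Ee δ) :=
    (cont_F0 A h0).comp (PiLp.continuous_ofLp 2 fun _ : Fin n => ℂ)
  obtain ⟨δE, hmemE, hminE⟩ :=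
    (isCompact_closedBall (0 : EuclideanSpace ℂ (Fin n)) ε).exists_isMinOn
      ⟨0, Metric.mem_closedBall_self hε.le⟩ hGc.continuousOn
  set δm : Fin n → ℂ := Ee δE with hδm
  have hmem : Pf δm δm ≤ ε ^ 2 := by
    exact (norm_le_iff hε.le δE).mp (mem_closedBall_zero_iff.mp hmemE)
  have Min : ∀ w : Fin n → ℂ, Pf (δm + w) (δm + w) ≤ ε ^ 2 →
      Lf A (h0 + δm) (h0 + δm) ≤ Lf A (h0 + (δm + w)) (h0 + (δm + w)) := by
    intro w hw
    have hx : Ee.symm (δm + w) ∈ Metric.closedBall (0 : EuclideanSpace ℂ (Fin n)) ε := by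
      rw [Metric.mem_closedBall, dist_zero_right, norm_le_iff hε.le]
      exact hw
    exact isMinOn_iff.mp hminE _ hx
  have MIN : ∀ w : Fin n → ℂ, 2 * Pf δm w + Pf w w ≤ ε ^ 2 - Pf δm δm →
      0 ≤ 2 * Pf (A *ᵥ (h0 + δm)) w + Lf A w w := by
    intro w hw
    have h1 := Min w (by rw [Pf_add_add]; linarith)
    rw [F_exp hA h0 δm w] at h1
    linarith
  clear_value δm
  set g : Fin n → ℂ := A *ᵥ (h0 + δm) with hgdef
  have hFz : c ≤ Lf A (h0 + δm) (h0 + δm) := H δm hmem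
  rcases eq_or_lt_of_le hmem with hb | hlt
  · -- boundary case : Pf δm δm = ε ^ 2
    have hε2 : (0 : ℝ) < ε ^ 2 := by positivity
    set lam := Pf δm g / ε ^ 2 with hlamdef
    set u : Fin n → ℂ := g + ((-lam : ℝ) : ℂ) • δm with hudef
    have hPu : Pf δm u = 0 := by
      rw [hudef, Pf_add_right, Pf_smul_right, hb, hlamdef]
      field_simp
      ring
    have hPu' : Pf u δm = 0 := by rw [Pf_symm]; exact hPu
    have hgu : g = u + (lam : ℂ) • δm := by
      rw [hudef, show ((-lam : ℝ) : ℂ) = -(lam : ℂ) by push_cast; ring]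
      module
    clear_value u
    clear_value lam
    have hNu : Pf u u ≤ 0 := by
      by_contra hpos0
      push_neg at hpos0
      have hsq : 0 < Real.sqrt (Pf u u) := Real.sqrt_pos.mpr hpos0
      have hkpos : 0 < Pf u u / ε ^ 2 := div_pos hpos0 hε2
      have hkε : Pf u u / ε ^ 2 * ε ^ 2 = Pf u u := by field_simp
      have hLe : 2 * Pf u u ≤ 0 := by
        apply nonpos_of_le_poly
          (C1 := Lf A u u - 2 * (Pf u u / ε ^ 2) * (lam * ε ^ 2))
          (C2 := 2 * (Pf u u / ε ^ 2) * Lf A u δm)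
          (C3 := (Pf u u / ε ^ 2) ^ 2 * Lf A δm δm)
          (div_pos hε hsq)
        intro t htpos htle
        set k := Pf u u / ε ^ 2 with hk
        set s := k * t ^ 2 with hsdef
        have hspos : 0 < s := by rw [hsdef]; positivity
        set w : Fin n → ℂ := ((-t : ℝ) : ℂ) • u + ((-s : ℝ) : ℂ) • δm with hw
        have hPδw : Pf δm w = -s * ε ^ 2 := by
          rw [hw]
          simp only [Pf_add_right, Pf_smul_right]
          rw [hPu, hb]; push_cast; ring
        have hPww : Pf w w = t ^ 2 * Pf u u + s ^ 2 * ε ^ 2 := by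
          rw [hw]
          simp only [Pf_add_right, Pf_add_left, Pf_smul_left, Pf_smul_right]
          rw [hPu, hPu', hb]; push_cast; ring
        have ht2 : t ^ 2 * Pf u u ≤ ε ^ 2 := by
          have h1 : t ^ 2 ≤ (ε / Real.sqrt (Pf u u)) ^ 2 := by nlinarith
          have h2 : (ε / Real.sqrt (Pf u u)) ^ 2 = ε ^ 2 / Pf u u := by
            rw [div_pow, Real.sq_sqrt hpos0.le]
          rw [h2] at h1
          have h3 := mul_le_mul_of_nonneg_right h1 hpos0.le
          calc t ^ 2 * Pf u u ≤ ε ^ 2 / Pf u u * Pf u u := h3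
            _ = ε ^ 2 := by field_simp
        have hball : 2 * Pf δm w + Pf w w ≤ ε ^ 2 - Pf δm δm := by
          rw [hPδw, hPww, hb, hsdef, hk]
          have hG : 2 * (-(Pf u u / ε ^ 2 * t ^ 2) * ε ^ 2)
              + (t ^ 2 * Pf u u + (Pf u u / ε ^ 2 * t ^ 2) ^ 2 * ε ^ 2)
              = t ^ 2 * Pf u u * (t ^ 2 * Pf u u - ε ^ 2) / ε ^ 2 := by
            field_simp
            ring
          rw [hG]
          have h1 : t ^ 2 * Pf u u * (t ^ 2 * Pf u u - ε ^ 2) ≤ 0 :=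
            mul_nonpos_of_nonneg_of_nonpos (mul_nonneg (sq_nonneg t) hpos0.le) (by linarith)
          have h2 := div_nonpos_of_nonpos_of_nonneg h1 hε2.le
          linarith
        have hmin := MIN w hball
        have hPgw : Pf g w = -t * Pf u u - s * (lam * ε ^ 2) := by
          rw [hgu, hw]
          simp only [Pf_add_right, Pf_add_left, Pf_smul_left, Pf_smul_right]
          rw [hPu, hPu', hb]; push_cast; ring
        have hLww : Lf A w w
            = t ^ 2 * Lf A u u + 2 * (t * s) * Lf A u δm + s ^ 2 * Lf A δm δm := by
          rw [hw]
          simp only [Lf_add_right, Lf_add_left, Lf_smul_left, Lf_smul_right]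
          rw [Lf_symm hA δm u]; push_cast; ring
        rw [hPgw, hLww, hsdef] at hmin
        have hgoal : t * (2 * Pf u u)
            ≤ t * (t * (Lf A u u - 2 * k * (lam * ε ^ 2))
              + t ^ 2 * (2 * k * Lf A u δm) + t ^ 3 * (k ^ 2 * Lf A δm δm)) := by
          nlinarith [hmin]
        have := le_of_mul_le_mul_left hgoal htpos
        linarith
      linarith
    have hu0 : u = 0 := eq_zero_of_Pf_self_nonpos hNu
    have hg : g = (lam : ℂ) • δm := by rw [hgu, hu0, zero_add]
    have hlam : lam ≤ 0 := by
      have h2 : 2 * (lam * ε ^ 2) ≤ 0 := by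
        apply nonpos_of_le_poly (C1 := Lf A δm δm) (C2 := 0) (C3 := 0) one_pos
        intro t htpos htle
        have hball : 2 * Pf δm (((-t : ℝ) : ℂ) • δm)
            + Pf (((-t : ℝ) : ℂ) • δm) (((-t : ℝ) : ℂ) • δm) ≤ ε ^ 2 - Pf δm δm := by
          simp only [Pf_smul_left, Pf_smul_right]
          rw [hb]
          nlinarith [hε2, mul_nonneg (mul_nonneg (by linarith : (0:ℝ) ≤ 2 - t) htpos.le) hε2.le]
        have hmin := MIN _ hball
        rw [hg] at hmin
        simp only [Pf_smul_left, Pf_smul_right, Lf_smul_left, Lf_smul_right] at hmin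
        rw [hb] at hmin
        have hgoal : t * (2 * (lam * ε ^ 2))
            ≤ t * (t * Lf A δm δm + t ^ 2 * 0 + t ^ 3 * 0) := by nlinarith [hmin]
        have := le_of_mul_le_mul_left hgoal htpos
        linarith
      nlinarith [hε2]
    have main : ∀ v : Fin n → ℂ, Pf δm v ≠ 0 → 0 ≤ Lf A v v + (-lam) * Pf v v := by
      intro v hr
      have hNv : 0 < Pf v v := by
        rcases (Pf_self_nonneg v).lt_or_eq with hpos | heq
        · exact hpos
        · exfalso
          apply hr
          rw [eq_zero_of_Pf_self_nonpos (le_of_eq heq.symm)]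
          exact Pf_zero_right δm
      set t := -2 * Pf δm v / Pf v v with htdef
      have hball : 2 * Pf δm ((t : ℂ) • v) + Pf ((t : ℂ) • v) ((t : ℂ) • v)
          ≤ ε ^ 2 - Pf δm δm := by
        simp only [Pf_smul_left, Pf_smul_right]
        rw [hb, htdef]
        have hz : 2 * (-2 * Pf δm v / Pf v v * Pf δm v)
            + -2 * Pf δm v / Pf v v * (-2 * Pf δm v / Pf v v * Pf v v) = 0 := by
          field_simp
          ring
        linarith
      have hmin := MIN _ hball
      rw [hg] at hmin
      simp only [Pf_smul_left, Pf_smul_right, Lf_smul_left, Lf_smul_right] at hmin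
      have hexpand : 2 * (t * (lam * Pf δm v)) + t * (t * Lf A v v)
          = (4 * Pf δm v ^ 2 / Pf v v ^ 2) * (Lf A v v + (-lam) * Pf v v) := by
        rw [htdef]; field_simp; ring
      rw [hexpand] at hmin
      have hc4 : 0 < 4 * Pf δm v ^ 2 / Pf v v ^ 2 := by positivity
      have hz : (4 * Pf δm v ^ 2 / Pf v v ^ 2) * 0
          ≤ (4 * Pf δm v ^ 2 / Pf v v ^ 2) * (Lf A v v + (-lam) * Pf v v) := by
        rw [mul_zero]; exact hmin
      exact le_of_mul_le_mul_left hz hc4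
    have hI : ∀ v : Fin n → ℂ, 0 ≤ Lf A v v + (-lam) * Pf v v := by
      intro v
      by_cases hr : Pf δm v = 0
      · have hr' : Pf v δm = 0 := by rw [Pf_symm]; exact hr
        have hple : -(Lf A v v + (-lam) * Pf v v) ≤ 0 := by
          apply nonpos_of_le_poly (C1 := 2 * Lf A v δm)
            (C2 := Lf A δm δm + (-lam) * ε ^ 2) (C3 := 0) one_pos
          intro s hspos hsle
          have hrs : Pf δm (v + ((s : ℝ) : ℂ) • δm) = s * ε ^ 2 := by
            rw [Pf_add_right, Pf_smul_right, hr, hb]; ring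
          have h1 := main (v + ((s : ℝ) : ℂ) • δm)
            (by rw [hrs]; exact ne_of_gt (mul_pos hspos hε2))
          have hL1 : Lf A (v + ((s : ℝ) : ℂ) • δm) (v + ((s : ℝ) : ℂ) • δm)
              = Lf A v v + 2 * (s * Lf A v δm) + s ^ 2 * Lf A δm δm := by
            simp only [Lf_add_right, Lf_add_left, Lf_smul_left, Lf_smul_right]
            rw [Lf_symm hA δm v]; ring
          have hP1 : Pf (v + ((s : ℝ) : ℂ) • δm) (v + ((s : ℝ) : ℂ) • δm)
              = Pf v v + s ^ 2 * ε ^ 2 := by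
            simp only [Pf_add_right, Pf_add_left, Pf_smul_left, Pf_smul_right]
            rw [hr, hr', hb]; ring
          rw [hL1, hP1] at h1
          nlinarith [h1]
        linarith
      · exact main v hr
    refine ⟨-lam, by linarith, hI, ?_⟩
    intro δ
    have hδd : δm + (δ - δm) = δ := by abel
    have h2 := F_exp hA h0 δm (δ - δm)
    rw [hδd, ← hgdef] at h2
    have hPgw : Pf g (δ - δm) = lam * Pf δm (δ - δm) := by rw [hg, Pf_smul_left]
    have hPδ := Pf_add_add δm (δ - δm)
    rw [hδd, hb] at hPδ
    have h3 := hI (δ - δm)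
    rw [h2, hPgw, hPδ]
    linarith
  · -- interior case
    have claim : ∀ v : Fin n → ℂ, Pf g v = 0 ∧ 0 ≤ Lf A v v := by
      intro v
      have hDpos : 0 < ε ^ 2 - Pf δm δm := by linarith
      set D := ε ^ 2 - Pf δm δm with hD
      set K := 2 * |Pf δm v| + Pf v v + 1 with hK
      have hKpos : 0 < K := by
        have h1 := Pf_self_nonneg v; have h2 := abs_nonneg (Pf δm v); rw [hK]; linarith
      set t0 := min 1 (D / K) with ht0
      have ht0pos : 0 < t0 := lt_min one_pos (div_pos hDpos hKpos)
      have ht0le1 : t0 ≤ 1 := min_le_left _ _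
      have ht0leDK : t0 ≤ D / K := min_le_right _ _
      clear_value t0 K D
      have hq : ∀ t : ℝ, |t| ≤ t0 → 0 ≤ 2 * (t * Pf g v) + t * (t * Lf A v v) := by
        intro t ht
        have habs : 0 ≤ |t| := abs_nonneg t
        have hball : 2 * (t * Pf δm v) + t * (t * Pf v v) ≤ D := by
          have h1 : 2 * (t * Pf δm v) ≤ 2 * (|t| * |Pf δm v|) := by
            have h2 := le_abs_self (t * Pf δm v); rw [abs_mul] at h2; linarith
          have h2 : t * (t * Pf v v) ≤ |t| * Pf v v := by
            have h3 : t * t = |t| * |t| := (abs_mul_abs_self t).symm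
            nlinarith [Pf_self_nonneg v, mul_nonneg habs (Pf_self_nonneg v), ht.trans ht0le1]
          have h3 : |t| * K ≤ D := by
            have h4 : |t| * K ≤ t0 * K :=
              mul_le_mul_of_nonneg_right ht hKpos.le
            have h5 : t0 * K ≤ (D / K) * K :=
              mul_le_mul_of_nonneg_right ht0leDK hKpos.le
            have h6 : (D / K) * K = D := by field_simp
            linarith
          rw [hK] at h3
          nlinarith [abs_nonneg (Pf δm v)]
        have hmin := MIN ((t : ℂ) • v) (by
          rw [Pf_smul_right, Pf_smul_left, Pf_smul_right]; linarith)
        rw [Pf_smul_right, Lf_smul_left, Lf_smul_right] at hmin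
        linarith
      have hge : Pf g v = 0 := by
        have hp : -(2 * Pf g v) ≤ 0 := by
          apply nonpos_of_le_poly (C1 := Lf A v v) (C2 := 0) (C3 := 0) ht0pos
          intro t htpos htle
          have h1 := hq t (by rw [abs_of_pos htpos]; exact htle)
          nlinarith
        have hm : 2 * Pf g v ≤ 0 := by
          apply nonpos_of_le_poly (C1 := Lf A v v) (C2 := 0) (C3 := 0) ht0pos
          intro t htpos htle
          have h1 := hq (-t) (by rw [abs_neg, abs_of_pos htpos]; exact htle)
          nlinarith
        linarith
      refine ⟨hge, ?_⟩
      have h1 := hq t0 (by rw [abs_of_pos ht0pos])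
      rw [hge] at h1
      nlinarith [mul_pos ht0pos ht0pos, h1]
    refine ⟨0, le_refl 0, ?_, ?_⟩
    · intro v
      have h1 := (claim v).2
      simpa using h1
    · intro δ
      have hδd : δm + (δ - δm) = δ := by abel
      have h1 := MIN (δ - δm)
      have h2 : Lf A (h0 + δ) (h0 + δ)
          = Lf A (h0 + δm) (h0 + δm) + 2 * Pf g (δ - δm) + Lf A (δ - δm) (δ - δm) := by
        have h4 := F_exp hA h0 δm (δ - δm)
        rw [hδd] at h4
        rw [h4, hgdef]
      rw [(claim (δ - δm)).1] at h2
      have h3 := (claim (δ - δm)).2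
      rw [h2]
      linarith

lemma dq_add (A : Matrix (Fin n) (Fin n) ℂ) (x y : Fin n → ℂ) :
    star (x + y) ⬝ᵥ A *ᵥ (x + y)
      = star x ⬝ᵥ A *ᵥ x + star x ⬝ᵥ A *ᵥ y + star y ⬝ᵥ A *ᵥ x + star y ⬝ᵥ A *ᵥ y := by
  rw [star_add, mulVec_add, dotProduct_add, add_dotProduct, add_dotProduct]
  ring

lemma dot_eq_ofReal {A : Matrix (Fin n) (Fin n) ℂ} (hA : A.IsHermitian) (v : Fin n → ℂ) :
    star v ⬝ᵥ A *ᵥ v = ((Lf A v v : ℝ) : ℂ) := by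
  apply Complex.ext
  · rw [Complex.ofReal_re]; rfl
  · rw [Complex.ofReal_im]; exact herm_im hA v

lemma dot_self_eq_ofReal (v : Fin n → ℂ) :
    star v ⬝ᵥ v = ((Pf v v : ℝ) : ℂ) := by
  apply Complex.ext
  · rw [Complex.ofReal_re]; rfl
  · rw [Complex.ofReal_im, star_dot_self, Complex.ofReal_im]

lemma sdot1 (t : ℂ) (x y : Fin n → ℂ) :
    star (t • x) ⬝ᵥ y = star t * (star x ⬝ᵥ y) := by
  rw [star_smul, smul_dotProduct, smul_eq_mul]

lemma sdot3 (t : ℂ) (x y : Fin n → ℂ) :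
    x ⬝ᵥ (t • y) = t * (x ⬝ᵥ y) := by
  rw [dotProduct_smul, smul_eq_mul]

lemma cross_sum {A : Matrix (Fin n) (Fin n) ℂ} (hA : A.IsHermitian) (x y : Fin n → ℂ) :
    star x ⬝ᵥ A *ᵥ y + star y ⬝ᵥ A *ᵥ x = ((2 * Lf A x y : ℝ) : ℂ) := by
  rw [← herm_conj hA x y, Complex.star_def, Complex.add_conj]
  rfl

lemma star_sum_elim (v : Fin n → ℂ) (w : Fin 1 → ℂ) :
    star (Sum.elim v w) = Sum.elim (star v) (star w) := by
  funext i; cases i <;> rfl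

lemma block_quad (A : Matrix (Fin n) (Fin n) ℂ) (b : Fin n → ℂ) (d : ℂ)
    (v : Fin n → ℂ) (t : ℂ) :
    star (Sum.elim v (fun _ : Fin 1 => t)) ⬝ᵥ
      (fromBlocks A (replicateCol (Fin 1) b) (replicateRow (Fin 1) (star b)) (of fun _ _ => d)) *ᵥ
      (Sum.elim v (fun _ : Fin 1 => t))
    = star v ⬝ᵥ A *ᵥ v + t * (star v ⬝ᵥ b) + star t * (star b ⬝ᵥ v) + star t * t * d := by
  rw [fromBlocks_mulVec, star_sum_elim, sumElim_dotProduct_sumElim]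
  have h1 : replicateCol (Fin 1) b *ᵥ (fun _ : Fin 1 => t) = t • b := by
    funext i; simp [mulVec, dotProduct, mul_comm]
  have h2 : replicateRow (Fin 1) (star b) *ᵥ v = fun _ : Fin 1 => star b ⬝ᵥ v := by
    funext j; simp [mulVec, dotProduct, replicateRow_apply]
  have h3 : (of fun _ _ : Fin 1 => d) *ᵥ (fun _ : Fin 1 => t) = fun _ : Fin 1 => d * t := by
    funext j; simp [mulVec, dotProduct]
  rw [Sum.elim_comp_inl, Sum.elim_comp_inr, h1, h2, h3]
  rw [dotProduct_add, dotProduct_add, dotProduct_smul]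
  simp [dotProduct, Fin.sum_univ_one]
  ring

lemma smul_one_add_mulVec (μ : ℂ) (A : Matrix (Fin n) (Fin n) ℂ) (v : Fin n → ℂ) :
    star v ⬝ᵥ (μ • (1 : Matrix (Fin n) (Fin n) ℂ) + A) *ᵥ v
      = μ * (star v ⬝ᵥ v) + star v ⬝ᵥ A *ᵥ v := by
  rw [add_mulVec, smul_mulVec, one_mulVec, dotProduct_add, dotProduct_smul, smul_eq_mul]


set_option maxHeartbeats 1600000 in
lemma forward_aux {A : Matrix (Fin n) (Fin n) ℂ} (hA : A.IsHermitian) (h0 : Fin n → ℂ)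
    (c ε μ : ℝ)
    (hI : ∀ v : Fin n → ℂ, 0 ≤ Lf A v v + μ * Pf v v)
    (hII : ∀ δ : Fin n → ℂ, c + μ * (ε ^ 2 - Pf δ δ) ≤ Lf A (h0 + δ) (h0 + δ))
    (v : Fin n → ℂ) (t : ℂ) :
    0 ≤ (μ : ℂ) * (star v ⬝ᵥ v) + star v ⬝ᵥ A *ᵥ v + t * (star v ⬝ᵥ (A *ᵥ h0))
      + star t * (star (A *ᵥ h0) ⬝ᵥ v)
      + star t * t * (star h0 ⬝ᵥ A *ᵥ h0 - (c : ℂ) - ((μ * ε ^ 2 : ℝ) : ℂ)) := by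
  by_cases h0t : t = 0
  · rw [h0t]
    simp only [star_zero, zero_mul, mul_zero, add_zero]
    rw [dot_self_eq_ofReal, dot_eq_ofReal hA]
    rw [show (μ : ℂ) * ((Pf v v : ℝ) : ℂ) + ((Lf A v v : ℝ) : ℂ)
        = ((μ * Pf v v + Lf A v v : ℝ) : ℂ) by push_cast; ring]
    rw [Complex.zero_le_real]
    have := hI v
    linarith
  · set δ : Fin n → ℂ := t⁻¹ • v with hδdef
    have hvδ : v = t • δ := by
      rw [hδdef, smul_smul, mul_inv_cancel₀ h0t, one_smul]
    have f1 : star δ ⬝ᵥ δ = ((Pf δ δ : ℝ) : ℂ) := dot_self_eq_ofReal δ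
    have f2 : star δ ⬝ᵥ A *ᵥ δ = ((Lf A δ δ : ℝ) : ℂ) := dot_eq_ofReal hA δ
    have f3 : star h0 ⬝ᵥ A *ᵥ h0 = ((Lf A h0 h0 : ℝ) : ℂ) := dot_eq_ofReal hA h0
    have f4 : star (A *ᵥ h0) ⬝ᵥ δ = star h0 ⬝ᵥ A *ᵥ δ := (herm_swap hA h0 δ).symm
    have f6 := cross_sum hA δ h0
    have g1 : star t * t = ((Complex.normSq t : ℝ) : ℂ) := by
      rw [Complex.star_def, ← Complex.normSq_eq_conj_mul_self]
    have heqT : (μ : ℂ) * (star v ⬝ᵥ v) + star v ⬝ᵥ A *ᵥ v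
        + t * (star v ⬝ᵥ (A *ᵥ h0)) + star t * (star (A *ᵥ h0) ⬝ᵥ v)
        + star t * t * (star h0 ⬝ᵥ A *ᵥ h0 - (c : ℂ) - ((μ * ε ^ 2 : ℝ) : ℂ))
        = ((Complex.normSq t
            * (Lf A h0 h0 + 2 * Lf A δ h0 + Lf A δ δ - c + μ * (Pf δ δ - ε ^ 2)) : ℝ) : ℂ)
        := by
      rw [hvδ]
      simp only [mulVec_smul, sdot1, sdot3]
      rw [f1, f2, f3, f4]
      push_cast at f6 g1 ⊢
      linear_combination (star t * t) * f6
        + ((μ : ℂ) * ((Pf δ δ : ℝ) : ℂ) + ((Lf A δ δ : ℝ) : ℂ) + 2 * ((Lf A δ h0 : ℝ) : ℂ)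
          + ((Lf A h0 h0 : ℝ) : ℂ) - (c : ℂ) - (μ : ℂ) * ((ε : ℂ)) ^ 2) * g1
    rw [heqT, Complex.zero_le_real]
    have hR : Lf A (h0 + δ) (h0 + δ)
        = Lf A h0 h0 + 2 * Lf A δ h0 + Lf A δ δ := by
      rw [Lf_add_add hA, Lf_symm hA h0 δ]
    have h2 := hII δ
    rw [hR] at h2
    exact mul_nonneg (Complex.normSq_nonneg t) (by linarith)

set_option maxHeartbeats 1600000 in
lemma reverse_aux {A : Matrix (Fin n) (Fin n) ℂ} (hA : A.IsHermitian) (h0 δ0 : Fin n → ℂ)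
    (c ε μ : ℝ) (hμ : 0 ≤ μ) (hPle : Pf δ0 δ0 ≤ ε ^ 2)
    (hq : 0 ≤ (μ : ℂ) * (star δ0 ⬝ᵥ δ0) + star δ0 ⬝ᵥ A *ᵥ δ0 + star δ0 ⬝ᵥ (A *ᵥ h0)
      + star (A *ᵥ h0) ⬝ᵥ δ0
      + (star h0 ⬝ᵥ A *ᵥ h0 - (c : ℂ) - ((μ * ε ^ 2 : ℝ) : ℂ))) :
    (c : ℂ) ≤ star (h0 + δ0) ⬝ᵥ A *ᵥ (h0 + δ0) := by
  have f1 : star δ0 ⬝ᵥ δ0 = ((Pf δ0 δ0 : ℝ) : ℂ) := dot_self_eq_ofReal δ0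
  have f2 : star δ0 ⬝ᵥ A *ᵥ δ0 = ((Lf A δ0 δ0 : ℝ) : ℂ) := dot_eq_ofReal hA δ0
  have f3 : star h0 ⬝ᵥ A *ᵥ h0 = ((Lf A h0 h0 : ℝ) : ℂ) := dot_eq_ofReal hA h0
  have f4 : star (A *ᵥ h0) ⬝ᵥ δ0 = star h0 ⬝ᵥ A *ᵥ δ0 := (herm_swap hA h0 δ0).symm
  have f6 := cross_sum hA δ0 h0
  have heq2 : (μ : ℂ) * (star δ0 ⬝ᵥ δ0) + star δ0 ⬝ᵥ A *ᵥ δ0 + star δ0 ⬝ᵥ (A *ᵥ h0)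
      + star (A *ᵥ h0) ⬝ᵥ δ0
      + (star h0 ⬝ᵥ A *ᵥ h0 - (c : ℂ) - ((μ * ε ^ 2 : ℝ) : ℂ))
      = ((Lf A h0 h0 + 2 * Lf A δ0 h0 + Lf A δ0 δ0 - c + μ * (Pf δ0 δ0 - ε ^ 2) : ℝ) : ℂ) := by
    rw [f1, f2, f3, f4]
    push_cast at f6 ⊢
    linear_combination f6
  rw [heq2, Complex.zero_le_real] at hq
  have hR : Lf A (h0 + δ0) (h0 + δ0)
      = Lf A h0 h0 + 2 * Lf A δ0 h0 + Lf A δ0 δ0 := by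
    rw [Lf_add_add hA, Lf_symm hA h0 δ0]
  have hmu2 : μ * (Pf δ0 δ0 - ε ^ 2) ≤ 0 :=
    mul_nonpos_of_nonneg_of_nonpos hμ (by linarith)
  have hre : c ≤ Lf A (h0 + δ0) (h0 + δ0) := by rw [hR]; linarith
  rw [Complex.le_def]
  refine ⟨hre, ?_⟩
  rw [Complex.ofReal_im]
  exact (herm_im hA (h0 + δ0)).symm

end RobustSinrAux

open RobustSinrAux

set_option maxHeartbeats 1600000 in
/-- **Robust SINR lower-bound constraint as an LMI.**
Let `A` be an `n × n` Hermitian complex matrix, `ĥ ∈ ℂⁿ`, `c ∈ ℝ` and `ε > 0`.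
Then `(ĥ + δ)ᴴ A (ĥ + δ) ≥ c` holds for every `δ` with `‖δ‖₂ ≤ ε` if and only if
there exists `μ ≥ 0` such that the Hermitian block matrix
`[[μIₙ + A, Aĥ], [ĥᴴA, ĥᴴAĥ − c − με²]]` is positive semidefinite. -/
theorem robust_sinr_lower_bound_lmi (n : ℕ)
    (A : Matrix (Fin n) (Fin n) ℂ) (hA : A.IsHermitian)
    (h : EuclideanSpace ℂ (Fin n)) (c ε : ℝ) (hε : 0 < ε) :
    (∀ δ : EuclideanSpace ℂ (Fin n), ‖δ‖ ≤ ε →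
        (c : ℂ) ≤ star (h + δ : Fin n → ℂ) ⬝ᵥ A *ᵥ (h + δ : Fin n → ℂ)) ↔
      ∃ μ : ℝ, 0 ≤ μ ∧
        (Matrix.fromBlocks ((μ : ℂ) • (1 : Matrix (Fin n) (Fin n) ℂ) + A)
          (Matrix.replicateCol (Fin 1) (A *ᵥ (h : Fin n → ℂ)))
          (Matrix.replicateRow (Fin 1) (star (A *ᵥ (h : Fin n → ℂ))))
          (Matrix.of fun _ _ =>
            star (h : Fin n → ℂ) ⬝ᵥ A *ᵥ (h : Fin n → ℂ) - (c : ℂ)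
              - ((μ * ε ^ 2 : ℝ) : ℂ))).PosSemidef := by
  classical
  constructor
  · intro Hyp
    obtain ⟨μ, hμ, hI, hII⟩ := key hA (h : Fin n → ℂ) c ε hε
      (fun δ hδ => (Complex.le_def.mp (Hyp ((WithLp.equiv 2 (Fin n → ℂ)).symm δ)
        ((norm_le_iff hε.le _).mpr hδ))).1)
    refine ⟨μ, hμ, posSemidef_iff_dotProduct_mulVec.mpr ⟨?_, ?_⟩⟩
    · rw [isHermitian_fromBlocks_iff]
      have hd : star (star (h : Fin n → ℂ) ⬝ᵥ A *ᵥ (h : Fin n → ℂ) - (c : ℂ)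
          - ((μ * ε ^ 2 : ℝ) : ℂ))
          = star (h : Fin n → ℂ) ⬝ᵥ A *ᵥ (h : Fin n → ℂ) - (c : ℂ)
          - ((μ * ε ^ 2 : ℝ) : ℂ) := by
        rw [dot_eq_ofReal hA]
        simp [Complex.star_def, map_sub, Complex.conj_ofReal]
      refine ⟨?_, ?_, ?_, ?_⟩
      · have h1 : (((μ : ℂ)) • (1 : Matrix (Fin n) (Fin n) ℂ))ᴴ = (μ : ℂ) • 1 := by
          rw [conjTranspose_smul, conjTranspose_one, Complex.star_def, Complex.conj_ofReal]
        exact Matrix.IsHermitian.add h1 hA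
      · rw [conjTranspose_replicateCol]
      · rw [conjTranspose_replicateRow, star_star]
      · show _ = _
        ext i j
        simp only [conjTranspose_apply, Matrix.of_apply]
        exact hd
    · intro x
      have hxe : x = Sum.elim (x ∘ Sum.inl) (fun _ : Fin 1 => x (Sum.inr 0)) := by
        funext i
        cases i with
        | inl j => rfl
        | inr j => rw [show j = 0 from Subsingleton.elim j 0]; rfl
      rw [hxe, block_quad, smul_one_add_mulVec]
      exact forward_aux hA (h : Fin n → ℂ) c ε μ hI hII _ _
  · rintro ⟨μ, hμ, hPSD⟩ δ hδ
    have hq := hPSD.dotProduct_mulVec_nonneg (Sum.elim (δ : Fin n → ℂ) (fun _ : Fin 1 => 1))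
    rw [block_quad, smul_one_add_mulVec] at hq
    simp only [star_one, one_mul, mul_one] at hq
    exact reverse_aux hA (h : Fin n → ℂ) (δ : Fin n → ℂ) c ε μ hμ
      ((norm_le_iff hε.le δ).mp hδ) hq
end

section
/- (Robust SINR upper-bound constraint as an LMI.) Let A be an n×n Hermitian complex matrix, ĥ ∈ ℂⁿ, c ∈ ℝ, and ε > 0. Then ((ĥ + δ)ᴴ A (ĥ + δ) ≤ c holds for every δ ∈ ℂⁿ with ‖δ‖₂ ≤ ε) if and only if there exists μ ≥ 0 such that the (n+1)×(n+1) Hermitian block matrix [[μIₙ − A, −Aĥ],[−ĥᴴA, c − ĥᴴAĥ − με²]] is positive semidefinite. -/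
open Matrix ComplexOrder

section RobustSinrHelpers

open Complex Filter Set

private lemma lim_aux (a b c d t0 : ℝ) (ht0 : 0 < t0)
    (H : ∀ t : ℝ, 0 < t → t ≤ t0 → a + b*t + c*t^2 + d*t^3 ≤ 0) : a ≤ 0 := by
  have hf : Continuous fun t : ℝ => a + b*t + c*t^2 + d*t^3 := by continuity
  have ht : Tendsto (fun t : ℝ => a + b*t + c*t^2 + d*t^3) (nhdsWithin 0 (Set.Ioi 0)) (nhds a) := by
    have h2 : Tendsto (fun t : ℝ => a + b*t + c*t^2 + d*t^3) (nhdsWithin 0 (Set.Ioi 0))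
        (nhds (a + b*0 + c*0^2 + d*0^3)) :=
      (hf.continuousAt (x := 0)).tendsto.mono_left nhdsWithin_le_nhds
    simpa using h2
  exact le_of_tendsto ht (Filter.eventually_of_mem (Ioc_mem_nhdsGT_of_mem ⟨le_refl 0, ht0⟩)
    (fun t htm => H t htm.1 htm.2))

private lemma lin_coeff_zero (b c d e t0 : ℝ) (ht0 : 0 < t0)
    (H : ∀ t : ℝ, |t| ≤ t0 → b*t + c*t^2 + d*t^3 + e*t^4 ≤ 0) : b = 0 := by
  have h1 : b ≤ 0 := by
    refine lim_aux b c d e t0 ht0 (fun t ht ht' => ?_)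
    have h := H t (by rw [abs_of_pos ht]; exact ht')
    nlinarith [mul_pos ht ht]
  have h2 : -b ≤ 0 := by
    refine lim_aux (-b) c (-d) e t0 ht0 (fun t ht ht' => ?_)
    have h := H (-t) (by rw [abs_neg, abs_of_pos ht]; exact ht')
    nlinarith [mul_pos ht ht]
  linarith

set_option linter.unusedSectionVars false

variable {m : Type*} [Fintype m] [DecidableEq m]

private lemma conjQ {A : Matrix m m ℂ} (hA : A.IsHermitian) (x y : m → ℂ) :
    star (star x ⬝ᵥ A *ᵥ y) = star y ⬝ᵥ A *ᵥ x := by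
  rw [star_dotProduct, star_star, star_mulVec, hA.eq, ← dotProduct_mulVec]

private lemma imQ {A : Matrix m m ℂ} (hA : A.IsHermitian) (x : m → ℂ) :
    (star x ⬝ᵥ A *ᵥ x).im = 0 := by
  have h := conjQ hA x x
  rw [Complex.star_def] at h
  exact Complex.conj_eq_iff_im.mp h

private lemma reQ_symm {A : Matrix m m ℂ} (hA : A.IsHermitian) (x y : m → ℂ) :
    (star x ⬝ᵥ A *ᵥ y).re = (star y ⬝ᵥ A *ᵥ x).re := by
  rw [← conjQ hA x y, Complex.star_def, Complex.conj_re]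

private lemma re_form {A : Matrix m m ℂ} (hA : A.IsHermitian) (v w d : m → ℂ) (t r : ℝ) :
    (star (v + ((t:ℂ) • w + (r:ℂ) • d)) ⬝ᵥ A *ᵥ (v + ((t:ℂ) • w + (r:ℂ) • d))).re
      = (star v ⬝ᵥ A *ᵥ v).re + 2*t*(star w ⬝ᵥ A *ᵥ v).re + 2*r*(star d ⬝ᵥ A *ᵥ v).re
        + t^2*(star w ⬝ᵥ A *ᵥ w).re + 2*(t*r)*(star d ⬝ᵥ A *ᵥ w).re
        + r^2*(star d ⬝ᵥ A *ᵥ d).re := by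
  have e1 := reQ_symm hA v w
  have e2 := reQ_symm hA v d
  have e3 := reQ_symm hA w d
  simp only [star_add, star_smul, add_dotProduct, dotProduct_add, mulVec_add, mulVec_smul,
    smul_dotProduct, dotProduct_smul, smul_eq_mul, Complex.star_def, Complex.conj_ofReal,
    Complex.add_re, Complex.mul_re, Complex.ofReal_re, Complex.ofReal_im, zero_mul, mul_zero,
    sub_zero, Complex.add_im, Complex.mul_im, add_zero, zero_add]
  rw [e1, e2, e3]
  ring

private lemma re_dot_form (v w d : m → ℂ) (t r : ℝ) :
    (star (v + ((t:ℂ) • w + (r:ℂ) • d)) ⬝ᵥ (v + ((t:ℂ) • w + (r:ℂ) • d))).re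
      = (star v ⬝ᵥ v).re + 2*t*(star w ⬝ᵥ v).re + 2*r*(star d ⬝ᵥ v).re
        + t^2*(star w ⬝ᵥ w).re + 2*(t*r)*(star d ⬝ᵥ w).re + r^2*(star d ⬝ᵥ d).re := by
  have := re_form (A := (1 : Matrix m m ℂ)) Matrix.isHermitian_one v w d t r
  simpa [Matrix.one_mulVec] using this

private lemma re_dot_symm (x y : m → ℂ) : (star x ⬝ᵥ y).re = (star y ⬝ᵥ x).re := by
  have := reQ_symm (A := (1 : Matrix m m ℂ)) Matrix.isHermitian_one x y
  simpa [Matrix.one_mulVec] using this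

private lemma re_form_c {A : Matrix m m ℂ} (hA : A.IsHermitian) (v u : m → ℂ) (s : ℂ) :
    (star (v + s • u) ⬝ᵥ A *ᵥ (v + s • u)).re
      = (star v ⬝ᵥ A *ᵥ v).re + 2*(star s * (star u ⬝ᵥ A *ᵥ v)).re
        + Complex.normSq s * (star u ⬝ᵥ A *ᵥ u).re := by
  have e1 : star v ⬝ᵥ A *ᵥ u = star (star u ⬝ᵥ A *ᵥ v) := (conjQ hA u v).symm
  simp only [star_add, star_smul, add_dotProduct, dotProduct_add, mulVec_add, mulVec_smul,
    smul_dotProduct, dotProduct_smul, smul_eq_mul, e1]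
  simp only [Complex.star_def, Complex.add_re, Complex.add_im, Complex.mul_re, Complex.mul_im,
    Complex.conj_re, Complex.conj_im, Complex.normSq_apply]
  ring

private lemma re_dot_form_c (v u : m → ℂ) (s : ℂ) :
    (star (v + s • u) ⬝ᵥ (v + s • u)).re
      = (star v ⬝ᵥ v).re + 2*(star s * (star u ⬝ᵥ v)).re
        + Complex.normSq s * (star u ⬝ᵥ u).re := by
  have := re_form_c (A := (1 : Matrix m m ℂ)) Matrix.isHermitian_one v u s
  simpa [Matrix.one_mulVec] using this

private lemma dot_smul_self (s : ℂ) (u : m → ℂ) :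
    (star (s • u) ⬝ᵥ (s • u)).re = Complex.normSq s * (star u ⬝ᵥ u).re := by
  have hq : star (s • u) ⬝ᵥ (s • u) = ((Complex.normSq s : ℝ):ℂ) * (star u ⬝ᵥ u) := by
    rw [star_smul, smul_dotProduct, dotProduct_smul, smul_eq_mul, smul_eq_mul, ← mul_assoc]
    congr 1
    rw [Complex.star_def, mul_comm, Complex.mul_conj]
  rw [hq, Complex.re_ofReal_mul]

private lemma star_sum_elim {a' b' : Type*} (a : a' → ℂ) (b : b' → ℂ) :
    star (Sum.elim a b) = Sum.elim (star a) (star b) := by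
  funext i; cases i <;> rfl

private lemma dot_self_re {n : ℕ} (x : EuclideanSpace ℂ (Fin n)) :
    (star (x : Fin n → ℂ) ⬝ᵥ (x : Fin n → ℂ)).re = ‖x‖^2 := by
  have h := inner_self_eq_norm_sq_to_K (𝕜 := ℂ) x
  have h2 : star (x : Fin n → ℂ) ⬝ᵥ (x : Fin n → ℂ) = (inner ℂ x x : ℂ) := by
    rw [dotProduct, PiLp.inner_apply]
    refine Finset.sum_congr rfl (fun i _ => ?_)
    simp [RCLike.inner_apply, Complex.star_def, mul_comm]
    rw [Complex.mul_conj, Complex.normSq_eq_norm_sq]; norm_cast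
  rw [h2, h]; norm_cast

private lemma dot_self_nonneg' (x : m → ℂ) : 0 ≤ (star x ⬝ᵥ x).re := by
  have : (0:ℂ) ≤ star x ⬝ᵥ x := dotProduct_star_self_nonneg x
  exact (Complex.le_def.mp this).1

private lemma dot_self_eq_zero_iff (x : m → ℂ) : (star x ⬝ᵥ x).re = 0 ↔ x = 0 := by
  constructor
  · intro hx
    have him : (star x ⬝ᵥ x).im = 0 := by
      have : (0:ℂ) ≤ star x ⬝ᵥ x := dotProduct_star_self_nonneg x
      exact ((Complex.le_def.mp this).2).symm
    have : star x ⬝ᵥ x = 0 := Complex.ext (by simpa using hx) (by simpa using him)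
    exact dotProduct_star_self_eq_zero.mp this
  · rintro rfl; simp

private lemma blockform_re {n : ℕ} (A : Matrix (Fin n) (Fin n) ℂ)
    (h : EuclideanSpace ℂ (Fin n)) (μ c ε : ℝ) (u : Fin n → ℂ) (τ : ℂ) :
    (star (Sum.elim u (fun _ : Fin 1 => τ)) ⬝ᵥ
      ((Matrix.fromBlocks ((μ : ℂ) • (1 : Matrix (Fin n) (Fin n) ℂ) - A)
          (Matrix.replicateCol (Fin 1) (-(A *ᵥ (h : Fin n → ℂ))))
          (Matrix.replicateRow (Fin 1) (-(star (A *ᵥ (h : Fin n → ℂ)))))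
          (Matrix.of fun _ _ =>
            (c : ℂ) - star (h : Fin n → ℂ) ⬝ᵥ A *ᵥ (h : Fin n → ℂ)
              - ((μ * ε ^ 2 : ℝ) : ℂ))) *ᵥ Sum.elim u (fun _ : Fin 1 => τ))).re
    = μ * (star u ⬝ᵥ u).re - (star u ⬝ᵥ A *ᵥ u).re
        - 2*(τ * (star u ⬝ᵥ A *ᵥ (h : Fin n → ℂ))).re
        + Complex.normSq τ * (c - (star (h : Fin n → ℂ) ⬝ᵥ A *ᵥ (h : Fin n → ℂ)).re - μ * ε^2) := by
  set hv : Fin n → ℂ := (h : Fin n → ℂ)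
  set Av : Fin n → ℂ := A *ᵥ hv with hAv
  set z : ℂ := (c : ℂ) - star hv ⬝ᵥ Av - ((μ * ε ^ 2 : ℝ) : ℂ) with hz
  have hcol : (Matrix.replicateCol (Fin 1) (-Av)) *ᵥ (fun _ : Fin 1 => τ) = fun i => -(Av i) * τ := by
    funext i; simp [Matrix.mulVec, dotProduct, Fin.sum_univ_one]
  have hrow : (Matrix.replicateRow (Fin 1) (-(star Av))) *ᵥ u = fun _ : Fin 1 => (-(star Av)) ⬝ᵥ u := by
    funext i; simp [Matrix.mulVec, dotProduct]
  have hD : (Matrix.of fun _ _ : Fin 1 => z) *ᵥ (fun _ : Fin 1 => τ) = fun _ : Fin 1 => z * τ := by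
    funext i; simp [Matrix.mulVec, dotProduct, Fin.sum_univ_one]
  have hval : (star (Sum.elim u (fun _ : Fin 1 => τ)) ⬝ᵥ
      ((Matrix.fromBlocks ((μ : ℂ) • (1 : Matrix (Fin n) (Fin n) ℂ) - A)
          (Matrix.replicateCol (Fin 1) (-Av)) (Matrix.replicateRow (Fin 1) (-(star Av)))
          (Matrix.of fun _ _ => z)) *ᵥ Sum.elim u (fun _ : Fin 1 => τ)))
      = (μ:ℂ) * (star u ⬝ᵥ u) - star u ⬝ᵥ A *ᵥ u
        - τ * (star u ⬝ᵥ Av) - star (τ * (star u ⬝ᵥ Av)) + star τ * τ * z := by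
    rw [Matrix.fromBlocks_mulVec]
    rw [Sum.elim_comp_inl, Sum.elim_comp_inr, hcol, hrow, hD, star_sum_elim]
    rw [sumElim_dotProduct_sumElim]
    rw [Matrix.sub_mulVec, Matrix.smul_mulVec, Matrix.one_mulVec]
    rw [dotProduct_add, dotProduct_add, dotProduct_sub, dotProduct_smul]
    have h1 : star u ⬝ᵥ (fun i => -(Av i) * τ) = -(τ * (star u ⬝ᵥ Av)) := by
      simp [dotProduct, Finset.mul_sum]; ring_nf
      exact Finset.sum_congr rfl (fun i _ => by ring)
    have h2a : star (fun _ : Fin 1 => τ) ⬝ᵥ (fun _ : Fin 1 => (-(star Av)) ⬝ᵥ u)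
        = star τ * ((-(star Av)) ⬝ᵥ u) := by
      simp [dotProduct]
    have h2b : star (fun _ : Fin 1 => τ) ⬝ᵥ (fun _ : Fin 1 => z * τ) = star τ * (z * τ) := by
      simp [dotProduct]
    have h3 : (-(star Av)) ⬝ᵥ u = - star (star u ⬝ᵥ Av) := by
      rw [neg_dotProduct, star_dotProduct]
    rw [h1, h2a, h2b, h3, StarMul.star_mul]
    simp [smul_eq_mul, Complex.star_def]
    ring
  have hsz : star τ * τ * z = ((Complex.normSq τ : ℝ) : ℂ) * z := by
    rw [Complex.star_def, mul_comm ((starRingEnd ℂ) τ) τ, Complex.mul_conj]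
  rw [hval, hsz]
  simp only [hz, Complex.add_re, Complex.sub_re, Complex.re_ofReal_mul, Complex.star_def,
    Complex.conj_re, Complex.ofReal_re]
  ring

end RobustSinrHelpers

set_option maxHeartbeats 1000000 in
/-- **Robust SINR upper-bound constraint as an LMI.**
Let `A` be an `n × n` Hermitian complex matrix, `ĥ ∈ ℂⁿ`, `c ∈ ℝ` and `ε > 0`.
Then `(ĥ + δ)ᴴ A (ĥ + δ) ≤ c` holds for every `δ` with `‖δ‖₂ ≤ ε` if and only if
there exists `μ ≥ 0` such that the Hermitian block matrix
`[[μIₙ − A, −Aĥ], [−ĥᴴA, c − ĥᴴAĥ − με²]]` is positive semidefinite. -/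
theorem robust_sinr_upper_bound_lmi (n : ℕ)
    (A : Matrix (Fin n) (Fin n) ℂ) (hA : A.IsHermitian)
    (h : EuclideanSpace ℂ (Fin n)) (c ε : ℝ) (hε : 0 < ε) :
    (∀ δ : EuclideanSpace ℂ (Fin n), ‖δ‖ ≤ ε →
        star (h + δ : Fin n → ℂ) ⬝ᵥ A *ᵥ (h + δ : Fin n → ℂ) ≤ (c : ℂ)) ↔
      ∃ μ : ℝ, 0 ≤ μ ∧
        (Matrix.fromBlocks ((μ : ℂ) • (1 : Matrix (Fin n) (Fin n) ℂ) - A)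
          (Matrix.replicateCol (Fin 1) (-(A *ᵥ (h : Fin n → ℂ))))
          (Matrix.replicateRow (Fin 1) (-(star (A *ᵥ (h : Fin n → ℂ)))))
          (Matrix.of fun _ _ =>
            (c : ℂ) - star (h : Fin n → ℂ) ⬝ᵥ A *ᵥ (h : Fin n → ℂ)
              - ((μ * ε ^ 2 : ℝ) : ℂ))).PosSemidef := by
  have hε2 : (0:ℝ) < ε^2 := by positivity
  constructor
  · intro H
    set hv : Fin n → ℂ := (h : Fin n → ℂ) with hv_def
    set d0 : Fin n → ℂ := (0 : Fin n → ℂ) with hd0_def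
    clear_value d0
    have contG : Continuous fun δ : EuclideanSpace ℂ (Fin n) =>
        (star (h + δ : Fin n → ℂ) ⬝ᵥ A *ᵥ (h + δ : Fin n → ℂ)).re := by
      have hcc : ∀ i : Fin n, Continuous fun δ : EuclideanSpace ℂ (Fin n) => (δ : Fin n → ℂ) i :=
        fun i => (continuous_apply i).comp (PiLp.continuous_ofLp (p := 2) (β := fun _ : Fin n => ℂ))
      apply Complex.continuous_re.comp
      show Continuous fun δ : EuclideanSpace ℂ (Fin n) =>
        ∑ i : Fin n, star ((h : Fin n → ℂ) i + (δ : Fin n → ℂ) i)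
          * (∑ j : Fin n, A i j * ((h : Fin n → ℂ) j + (δ : Fin n → ℂ) j))
      apply continuous_finset_sum
      intro i _
      apply Continuous.mul
      · exact continuous_star.comp (continuous_const.add (hcc i))
      · apply continuous_finset_sum
        intro j _
        exact continuous_const.mul (continuous_const.add (hcc j))
    obtain ⟨δs, hsmem, hsmax'⟩ :=
      (isCompact_closedBall (0 : EuclideanSpace ℂ (Fin n)) ε).exists_isMaxOn
        ⟨0, Metric.mem_closedBall_self hε.le⟩ contG.continuousOn
    have hsmax := isMaxOn_iff.mp hsmax'
    set d : Fin n → ℂ := (δs : Fin n → ℂ) with hd_def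
    clear_value d
    have hds_norm : ‖(WithLp.equiv 2 (∀ _ : Fin n, ℂ)).symm d‖ ≤ ε := by
      have := hsmem
      rw [mem_closedBall_zero_iff] at this
      rw [hd_def]; simpa using this
    have Hre : ∀ y : Fin n → ℂ, ‖(WithLp.equiv 2 (∀ _ : Fin n, ℂ)).symm y‖ ≤ ε →
        (star (hv + y) ⬝ᵥ A *ᵥ (hv + y)).re ≤ c := by
      intro y hy
      have h1 := (Complex.le_def.mp (H ((WithLp.equiv 2 (∀ _ : Fin n, ℂ)).symm y) hy)).1
      simpa using h1
    have Hmax : ∀ y : Fin n → ℂ, ‖(WithLp.equiv 2 (∀ _ : Fin n, ℂ)).symm y‖ ≤ ε →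
        (star (hv + y) ⬝ᵥ A *ᵥ (hv + y)).re
          ≤ (star (hv + d) ⬝ᵥ A *ᵥ (hv + d)).re := by
      intro y hy
      exact hsmax ((WithLp.equiv 2 (∀ _ : Fin n, ℂ)).symm y) (mem_closedBall_zero_iff.mpr hy)
    -- the workhorse inequality
    have main : ∀ (w : Fin n → ℂ) (t r : ℝ),
        (star d ⬝ᵥ d).re + 2*t*(star w ⬝ᵥ d).re + 2*r*(star d ⬝ᵥ d).re
          + t^2*(star w ⬝ᵥ w).re + 2*(t*r)*(star d ⬝ᵥ w).re + r^2*(star d ⬝ᵥ d).re ≤ ε^2 →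
        2*t*(star w ⬝ᵥ A *ᵥ (hv + d)).re + 2*r*(star d ⬝ᵥ A *ᵥ (hv + d)).re
          + t^2*(star w ⬝ᵥ A *ᵥ w).re + 2*(t*r)*(star d ⬝ᵥ A *ᵥ w).re
          + r^2*(star d ⬝ᵥ A *ᵥ d).re ≤ 0 := by
      intro w t r hm
      have hdot : (star (d + ((t:ℂ) • w + (r:ℂ) • d)) ⬝ᵥ (d + ((t:ℂ) • w + (r:ℂ) • d))).re
          = ‖(WithLp.equiv 2 (∀ _ : Fin n, ℂ)).symm (d + ((t:ℂ) • w + (r:ℂ) • d))‖^2 :=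
        dot_self_re ((WithLp.equiv 2 (∀ _ : Fin n, ℂ)).symm (d + ((t:ℂ) • w + (r:ℂ) • d)))
      have hna : ‖(WithLp.equiv 2 (∀ _ : Fin n, ℂ)).symm (d + ((t:ℂ) • w + (r:ℂ) • d))‖ ≤ ε := by
        have h2 : ‖(WithLp.equiv 2 (∀ _ : Fin n, ℂ)).symm (d + ((t:ℂ) • w + (r:ℂ) • d))‖^2 ≤ ε^2 := by
          rw [← hdot, re_dot_form]
          exact hm
        nlinarith [norm_nonneg ((WithLp.equiv 2 (∀ _ : Fin n, ℂ)).symm (d + ((t:ℂ) • w + (r:ℂ) • d))), hε.le, h2]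
      have h4 : (star (hv + (d + ((t:ℂ) • w + (r:ℂ) • d)))
            ⬝ᵥ A *ᵥ (hv + (d + ((t:ℂ) • w + (r:ℂ) • d)))).re
          ≤ (star (hv + d) ⬝ᵥ A *ᵥ (hv + d)).re := Hmax _ hna
      rw [← add_assoc] at h4
      rw [re_form hA] at h4
      linarith [h4]
    have hvAv_le_c : (star (hv + d) ⬝ᵥ A *ᵥ (hv + d)).re ≤ c := Hre d hds_norm
    have hNd_eq : (star d ⬝ᵥ d).re = ‖(WithLp.equiv 2 (∀ _ : Fin n, ℂ)).symm d‖^2 := dot_self_re ((WithLp.equiv 2 (∀ _ : Fin n, ℂ)).symm d)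
    have hNd_le : (star d ⬝ᵥ d).re ≤ ε^2 := by
      rw [hNd_eq]; nlinarith [norm_nonneg ((WithLp.equiv 2 (∀ _ : Fin n, ℂ)).symm d)]
    obtain ⟨μ, hμ0, hstat, hpsd, hslack⟩ :
        ∃ μ : ℝ, 0 ≤ μ ∧ A *ᵥ (hv + d) = ((μ:ℝ):ℂ) • d
          ∧ (∀ u : Fin n → ℂ, (star u ⬝ᵥ A *ᵥ u).re ≤ μ * (star u ⬝ᵥ u).re)
          ∧ μ * (ε^2 - (star d ⬝ᵥ d).re) = 0 := by
      by_cases hb : ‖(WithLp.equiv 2 (∀ _ : Fin n, ℂ)).symm d‖ = ε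
      · -- boundary case
        have hNd : (star d ⬝ᵥ d).re = ε^2 := by rw [hNd_eq, hb]
        have stepA : ∀ w : Fin n → ℂ, (star w ⬝ᵥ d).re = 0 →
            (star w ⬝ᵥ A *ᵥ (hv + d)).re = 0 := by
          intro w hw
          by_cases hw0 : w = 0
          · subst hw0; simp
          have hwd' : (star d ⬝ᵥ w).re = 0 := by rw [re_dot_symm]; exact hw
          have hNw_pos : 0 < (star w ⬝ᵥ w).re := by
            rcases (dot_self_nonneg' w).lt_or_eq with hlt | heq
            · exact hlt
            · exact absurd ((dot_self_eq_zero_iff w).mp heq.symm) hw0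
          have ht0 : (0:ℝ) < ε / Real.sqrt ((star w ⬝ᵥ w).re) :=
            div_pos hε (Real.sqrt_pos.mpr hNw_pos)
          have key : ∀ t : ℝ, |t| ≤ ε / Real.sqrt ((star w ⬝ᵥ w).re) →
              (2*(star w ⬝ᵥ A *ᵥ (hv + d)).re)*t
              + ((star w ⬝ᵥ A *ᵥ w).re
                  - 2*((star w ⬝ᵥ w).re/ε^2)*(star d ⬝ᵥ A *ᵥ (hv + d)).re)*t^2
              + (-(2*((star w ⬝ᵥ w).re/ε^2)*(star d ⬝ᵥ A *ᵥ w).re))*t^3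
              + ((((star w ⬝ᵥ w).re)^2/ε^4)*(star d ⬝ᵥ A *ᵥ d).re)*t^4 ≤ 0 := by
            intro t ht
            have htsq : t^2 * (star w ⬝ᵥ w).re ≤ ε^2 := by
              have h1 : |t|^2 ≤ (ε / Real.sqrt ((star w ⬝ᵥ w).re))^2 :=
                pow_le_pow_left₀ (abs_nonneg t) ht 2
              rw [sq_abs, div_pow, Real.sq_sqrt hNw_pos.le] at h1
              calc t^2 * (star w ⬝ᵥ w).re
                  ≤ (ε^2/(star w ⬝ᵥ w).re) * (star w ⬝ᵥ w).re :=
                    mul_le_mul_of_nonneg_right h1 hNw_pos.le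
                _ = ε^2 := by field_simp
            have hq0 : 0 ≤ t^2*(star w ⬝ᵥ w).re := mul_nonneg (sq_nonneg t) hNw_pos.le
            have hmem : (star d ⬝ᵥ d).re + 2*t*(star w ⬝ᵥ d).re
                + 2*(-(t^2*(star w ⬝ᵥ w).re/ε^2))*(star d ⬝ᵥ d).re
                + t^2*(star w ⬝ᵥ w).re
                + 2*(t*(-(t^2*(star w ⬝ᵥ w).re/ε^2)))*(star d ⬝ᵥ w).re
                + (-(t^2*(star w ⬝ᵥ w).re/ε^2))^2*(star d ⬝ᵥ d).re ≤ ε^2 := by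
              rw [hw, hwd', hNd]
              have e1 : 2*(-(t^2*(star w ⬝ᵥ w).re/ε^2))*ε^2 = -(2*(t^2*(star w ⬝ᵥ w).re)) := by
                field_simp
              have e2 : (-(t^2*(star w ⬝ᵥ w).re/ε^2))^2*ε^2 = (t^2*(star w ⬝ᵥ w).re)^2/ε^2 := by
                rw [neg_sq, div_pow]
                field_simp
              rw [e1, e2]
              have e3 : (t^2*(star w ⬝ᵥ w).re)^2/ε^2 ≤ t^2*(star w ⬝ᵥ w).re := by
                rw [div_le_iff₀ hε2]
                nlinarith [mul_le_mul_of_nonneg_left htsq hq0]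
              linarith
            have hcon := main w t (-(t^2*(star w ⬝ᵥ w).re/ε^2)) hmem
            have heq : (2*(star w ⬝ᵥ A *ᵥ (hv + d)).re)*t
                + ((star w ⬝ᵥ A *ᵥ w).re
                    - 2*((star w ⬝ᵥ w).re/ε^2)*(star d ⬝ᵥ A *ᵥ (hv + d)).re)*t^2
                + (-(2*((star w ⬝ᵥ w).re/ε^2)*(star d ⬝ᵥ A *ᵥ w).re))*t^3
                + ((((star w ⬝ᵥ w).re)^2/ε^4)*(star d ⬝ᵥ A *ᵥ d).re)*t^4
                = 2*t*(star w ⬝ᵥ A *ᵥ (hv + d)).re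
                  + 2*(-(t^2*(star w ⬝ᵥ w).re/ε^2))*(star d ⬝ᵥ A *ᵥ (hv + d)).re
                  + t^2*(star w ⬝ᵥ A *ᵥ w).re
                  + 2*(t*(-(t^2*(star w ⬝ᵥ w).re/ε^2)))*(star d ⬝ᵥ A *ᵥ w).re
                  + (-(t^2*(star w ⬝ᵥ w).re/ε^2))^2*(star d ⬝ᵥ A *ᵥ d).re := by
              field_simp
              ring
            rw [heq]
            exact hcon
          have h2X := lin_coeff_zero _ _ _ _ _ ht0 key
          linarith
        -- nonnegativity of the multiplier
        have hY0 : 0 ≤ (star d ⬝ᵥ A *ᵥ (hv + d)).re := by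
          have haux : ∀ s : ℝ, 0 < s → s ≤ 1 →
              (-(2*(star d ⬝ᵥ A *ᵥ (hv + d)).re)) + (star d ⬝ᵥ A *ᵥ d).re*s
                + 0*s^2 + 0*s^3 ≤ 0 := by
            intro s hs0 hs1
            have hmem : (star d ⬝ᵥ d).re + 2*(0:ℝ)*(star d0 ⬝ᵥ d).re
                + 2*(-s)*(star d ⬝ᵥ d).re + (0:ℝ)^2*(star d0 ⬝ᵥ d0).re
                + 2*((0:ℝ)*(-s))*(star d ⬝ᵥ d0).re + (-s)^2*(star d ⬝ᵥ d).re ≤ ε^2 := by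
              rw [hNd]
              nlinarith [mul_pos hε2 hs0, hs1, hs0]
            have hcon := main d0 0 (-s) hmem
            rw [hd0_def] at hcon
            simp only [star_zero, zero_dotProduct, dotProduct_zero,
              Matrix.mulVec_zero, Complex.zero_re, mul_zero, zero_mul, add_zero, zero_add] at hcon
            by_contra hcontra
            push_neg at hcontra
            nlinarith [mul_pos hs0 hcontra, hcon]
          have := lim_aux _ _ _ _ 1 one_pos haux
          linarith
        have hμ0' : 0 ≤ (star d ⬝ᵥ A *ᵥ (hv + d)).re/ε^2 := div_nonneg hY0 hε2.le
        -- stationarity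
        have hstat : A *ᵥ (hv + d) = ((((star d ⬝ᵥ A *ᵥ (hv + d)).re/ε^2 : ℝ)):ℂ) • d := by
          have hw0d : (star (A *ᵥ (hv + d) - (((star d ⬝ᵥ A *ᵥ (hv + d)).re/ε^2 : ℝ):ℂ) • d) ⬝ᵥ d).re = 0 := by
            simp only [star_sub, star_smul, sub_dotProduct, smul_dotProduct,
              smul_eq_mul, Complex.star_def, Complex.conj_ofReal, Complex.sub_re,
              Complex.re_ofReal_mul]
            rw [re_dot_symm (A *ᵥ (hv + d)) d, hNd]
            field_simp
            ring
          have h0 := stepA _ hw0d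
          have hexp : (star (A *ᵥ (hv + d) - (((star d ⬝ᵥ A *ᵥ (hv + d)).re/ε^2 : ℝ):ℂ) • d)
              ⬝ᵥ ((A *ᵥ (hv + d) - (((star d ⬝ᵥ A *ᵥ (hv + d)).re/ε^2 : ℝ):ℂ) • d)
                + (((star d ⬝ᵥ A *ᵥ (hv + d)).re/ε^2 : ℝ):ℂ) • d)).re
              = (star (A *ᵥ (hv + d) - (((star d ⬝ᵥ A *ᵥ (hv + d)).re/ε^2 : ℝ):ℂ) • d)
                  ⬝ᵥ (A *ᵥ (hv + d) - (((star d ⬝ᵥ A *ᵥ (hv + d)).re/ε^2 : ℝ):ℂ) • d)).re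
                + ((star d ⬝ᵥ A *ᵥ (hv + d)).re/ε^2)
                  * (star (A *ᵥ (hv + d) - (((star d ⬝ᵥ A *ᵥ (hv + d)).re/ε^2 : ℝ):ℂ) • d) ⬝ᵥ d).re := by
            rw [dotProduct_add, dotProduct_smul]
            simp only [smul_eq_mul, Complex.add_re, Complex.re_ofReal_mul]
          have h0' : (star (A *ᵥ (hv + d) - (((star d ⬝ᵥ A *ᵥ (hv + d)).re/ε^2 : ℝ):ℂ) • d)
              ⬝ᵥ ((A *ᵥ (hv + d) - (((star d ⬝ᵥ A *ᵥ (hv + d)).re/ε^2 : ℝ):ℂ) • d)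
                + (((star d ⬝ᵥ A *ᵥ (hv + d)).re/ε^2 : ℝ):ℂ) • d)).re = 0 := by
            rw [sub_add_cancel]
            exact h0
          rw [hexp, hw0d, mul_zero, add_zero] at h0'
          have hz := (dot_self_eq_zero_iff _).mp h0'
          exact sub_eq_zero.mp hz
        -- positive semidefiniteness of μ I - A
        have case1 : ∀ u : Fin n → ℂ, (star u ⬝ᵥ d).re ≠ 0 →
            (star u ⬝ᵥ A *ᵥ u).re ≤ ((star d ⬝ᵥ A *ᵥ (hv + d)).re/ε^2) * (star u ⬝ᵥ u).re := by
          intro u hru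
          have hu0 : u ≠ 0 := by rintro rfl; simp at hru
          have hNu_pos : 0 < (star u ⬝ᵥ u).re := by
            rcases (dot_self_nonneg' u).lt_or_eq with hlt | heq
            · exact hlt
            · exact absurd ((dot_self_eq_zero_iff u).mp heq.symm) hu0
          have hmem : (star d ⬝ᵥ d).re
              + 2*(-(2*(star u ⬝ᵥ d).re/(star u ⬝ᵥ u).re))*(star u ⬝ᵥ d).re
              + 2*(0:ℝ)*(star d ⬝ᵥ d).re
              + (-(2*(star u ⬝ᵥ d).re/(star u ⬝ᵥ u).re))^2*(star u ⬝ᵥ u).re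
              + 2*((-(2*(star u ⬝ᵥ d).re/(star u ⬝ᵥ u).re))*(0:ℝ))*(star d ⬝ᵥ u).re
              + (0:ℝ)^2*(star d ⬝ᵥ d).re ≤ ε^2 := by
            rw [hNd]
            have e4 : 2*(-(2*(star u ⬝ᵥ d).re/(star u ⬝ᵥ u).re))*(star u ⬝ᵥ d).re
                = -(4*((star u ⬝ᵥ d).re)^2/(star u ⬝ᵥ u).re) := by
              field_simp [hNu_pos.ne']
              ring
            have e5 : (-(2*(star u ⬝ᵥ d).re/(star u ⬝ᵥ u).re))^2*(star u ⬝ᵥ u).re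
                = 4*((star u ⬝ᵥ d).re)^2/(star u ⬝ᵥ u).re := by
              rw [neg_sq, div_pow]
              field_simp [hNu_pos.ne']
              ring
            rw [e4, e5]
            nlinarith [hε2]
          have hcon := main u (-(2*(star u ⬝ᵥ d).re/(star u ⬝ᵥ u).re)) 0 hmem
          rw [hstat] at hcon
          simp only [dotProduct_smul, smul_eq_mul, Complex.re_ofReal_mul, mul_zero, zero_mul,
            add_zero] at hcon
          have htNu : (-(2*(star u ⬝ᵥ d).re/(star u ⬝ᵥ u).re))*(star u ⬝ᵥ u).re
              = -(2*(star u ⬝ᵥ d).re) := by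
            field_simp [hNu_pos.ne']
          have htne : (-(2*(star u ⬝ᵥ d).re/(star u ⬝ᵥ u).re)) ≠ 0 :=
            neg_ne_zero.mpr (div_ne_zero (mul_ne_zero two_ne_zero hru) hNu_pos.ne')
          have ht2pos : 0 < (-(2*(star u ⬝ᵥ d).re/(star u ⬝ᵥ u).re))^2 := by
            positivity
          have e6 : 2*(-(2*(star u ⬝ᵥ d).re/(star u ⬝ᵥ u).re))
                *(((star d ⬝ᵥ A *ᵥ (hv + d)).re/ε^2)*(star u ⬝ᵥ d).re)
              = -(((star d ⬝ᵥ A *ᵥ (hv + d)).re/ε^2)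
                *((-(2*(star u ⬝ᵥ d).re/(star u ⬝ᵥ u).re))^2*(star u ⬝ᵥ u).re)) := by
            field_simp
          nlinarith [hcon, e6, ht2pos]
        have hpsd : ∀ u : Fin n → ℂ, (star u ⬝ᵥ A *ᵥ u).re
            ≤ ((star d ⬝ᵥ A *ᵥ (hv + d)).re/ε^2) * (star u ⬝ᵥ u).re := by
          intro u
          by_cases hru : (star u ⬝ᵥ d).re = 0
          · have hrud : (star d ⬝ᵥ u).re = 0 := by rw [re_dot_symm]; exact hru
            have hs : ∀ s : ℝ, 0 < s → s ≤ 1 →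
                ((star u ⬝ᵥ A *ᵥ u).re - ((star d ⬝ᵥ A *ᵥ (hv + d)).re/ε^2) * (star u ⬝ᵥ u).re)
                + (2*(star d ⬝ᵥ A *ᵥ u).re)*s
                + ((star d ⬝ᵥ A *ᵥ d).re - ((star d ⬝ᵥ A *ᵥ (hv + d)).re/ε^2)*ε^2)*s^2
                + 0*s^3 ≤ 0 := by
              intro s hs0 hs1
              have hne : (star (u + ((s:ℂ) • d + ((0:ℝ):ℂ) • d)) ⬝ᵥ d).re ≠ 0 := by
                simp only [star_add, star_smul, add_dotProduct, smul_dotProduct,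
                  smul_eq_mul, Complex.star_def, Complex.conj_ofReal, Complex.add_re,
                  Complex.re_ofReal_mul, hru, hNd]
                simp only [Complex.ofReal_zero, zero_mul, add_zero, zero_add]
                positivity
              have hc1 := case1 _ hne
              rw [re_form hA, re_dot_form] at hc1
              rw [hrud, hNd] at hc1
              have hgoal : ((star u ⬝ᵥ A *ᵥ u).re
                    - ((star d ⬝ᵥ A *ᵥ (hv + d)).re/ε^2) * (star u ⬝ᵥ u).re)
                  + (2*(star d ⬝ᵥ A *ᵥ u).re)*s
                  + ((star d ⬝ᵥ A *ᵥ d).re - ((star d ⬝ᵥ A *ᵥ (hv + d)).re/ε^2)*ε^2)*s^2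
                  + 0*s^3
                  = ((star u ⬝ᵥ A *ᵥ u).re + 2*s*(star d ⬝ᵥ A *ᵥ u).re
                      + 2*0*(star d ⬝ᵥ A *ᵥ u).re
                      + s^2*(star d ⬝ᵥ A *ᵥ d).re + 2*(s*0)*(star d ⬝ᵥ A *ᵥ d).re
                      + 0^2*(star d ⬝ᵥ A *ᵥ d).re)
                    - ((star d ⬝ᵥ A *ᵥ (hv + d)).re/ε^2) * ((star u ⬝ᵥ u).re + 2*s*0 + 2*0*0
                      + s^2*ε^2 + 2*(s*0)*0 + 0^2*ε^2) := by
                ring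
              rw [hgoal]
              linarith [hc1]
            have := lim_aux _ _ _ _ 1 one_pos hs
            linarith
          · exact case1 u hru
        exact ⟨(star d ⬝ᵥ A *ᵥ (hv + d)).re/ε^2, hμ0', hstat, hpsd, by rw [hNd]; ring⟩
      · -- interior case
        have hlt : ‖(WithLp.equiv 2 (∀ _ : Fin n, ℂ)).symm d‖ < ε := lt_of_le_of_ne hds_norm hb
        have stepB : ∀ w : Fin n → ℂ,
            (star w ⬝ᵥ A *ᵥ (hv + d)).re = 0 ∧ (star w ⬝ᵥ A *ᵥ w).re ≤ 0 := by
          intro w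
          by_cases hw0 : w = 0
          · subst hw0; simp
          have hNw_pos : 0 < (star w ⬝ᵥ w).re := by
            rcases (dot_self_nonneg' w).lt_or_eq with hlt' | heq
            · exact hlt'
            · exact absurd ((dot_self_eq_zero_iff w).mp heq.symm) hw0
          have hNw_eq : (star w ⬝ᵥ w).re = ‖(WithLp.equiv 2 (∀ _ : Fin n, ℂ)).symm w‖^2 := dot_self_re ((WithLp.equiv 2 (∀ _ : Fin n, ℂ)).symm w)
          have hnw_pos : 0 < ‖(WithLp.equiv 2 (∀ _ : Fin n, ℂ)).symm w‖ := by
            nlinarith [hNw_eq, hNw_pos, norm_nonneg ((WithLp.equiv 2 (∀ _ : Fin n, ℂ)).symm w)]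
          have ht0 : 0 < (ε - ‖(WithLp.equiv 2 (∀ _ : Fin n, ℂ)).symm d‖) / ‖(WithLp.equiv 2 (∀ _ : Fin n, ℂ)).symm w‖ := div_pos (by linarith) hnw_pos
          have key : ∀ t : ℝ, |t| ≤ (ε - ‖(WithLp.equiv 2 (∀ _ : Fin n, ℂ)).symm d‖) / ‖(WithLp.equiv 2 (∀ _ : Fin n, ℂ)).symm w‖ →
              (2*(star w ⬝ᵥ A *ᵥ (hv + d)).re)*t + ((star w ⬝ᵥ A *ᵥ w).re)*t^2
                + 0*t^3 + 0*t^4 ≤ 0 := by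
            intro t ht
            have hb1 : ‖(WithLp.equiv 2 (∀ _ : Fin n, ℂ)).symm (d + ((t:ℂ) • w + ((0:ℝ):ℂ) • d))‖ ≤ ε := by
              calc ‖(WithLp.equiv 2 (∀ _ : Fin n, ℂ)).symm (d + ((t:ℂ) • w + ((0:ℝ):ℂ) • d))‖
                  = ‖(WithLp.equiv 2 (∀ _ : Fin n, ℂ)).symm d + (WithLp.equiv 2 (∀ _ : Fin n, ℂ)).symm ((t:ℂ) • w + ((0:ℝ):ℂ) • d)‖ := by
                    rfl
                _ ≤ ‖(WithLp.equiv 2 (∀ _ : Fin n, ℂ)).symm d‖ + ‖(WithLp.equiv 2 (∀ _ : Fin n, ℂ)).symm ((t:ℂ) • w + ((0:ℝ):ℂ) • d)‖ := norm_add_le _ _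
                _ = ‖(WithLp.equiv 2 (∀ _ : Fin n, ℂ)).symm d‖ + ‖(WithLp.equiv 2 (∀ _ : Fin n, ℂ)).symm ((t:ℂ) • w) + (WithLp.equiv 2 (∀ _ : Fin n, ℂ)).symm (((0:ℝ):ℂ) • d)‖ := by
                    rfl
                _ ≤ ‖(WithLp.equiv 2 (∀ _ : Fin n, ℂ)).symm d‖ + (‖(WithLp.equiv 2 (∀ _ : Fin n, ℂ)).symm ((t:ℂ) • w)‖ + ‖(WithLp.equiv 2 (∀ _ : Fin n, ℂ)).symm (((0:ℝ):ℂ) • d)‖) :=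
                    add_le_add_right (norm_add_le _ _) _
                _ = ‖(WithLp.equiv 2 (∀ _ : Fin n, ℂ)).symm d‖ + |t| * ‖(WithLp.equiv 2 (∀ _ : Fin n, ℂ)).symm w‖ := by
                    rw [WithLp.equiv_symm_apply, WithLp.toLp_smul, WithLp.toLp_smul, norm_smul, norm_smul]
                    simp [Complex.norm_real]
                _ ≤ ‖(WithLp.equiv 2 (∀ _ : Fin n, ℂ)).symm d‖ + ((ε - ‖(WithLp.equiv 2 (∀ _ : Fin n, ℂ)).symm d‖) / ‖(WithLp.equiv 2 (∀ _ : Fin n, ℂ)).symm w‖) * ‖(WithLp.equiv 2 (∀ _ : Fin n, ℂ)).symm w‖ :=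
                    add_le_add_right (mul_le_mul_of_nonneg_right ht (norm_nonneg _)) _
                _ = ε := by field_simp; ring
            have hdot : (star (d + ((t:ℂ) • w + ((0:ℝ):ℂ) • d))
                ⬝ᵥ (d + ((t:ℂ) • w + ((0:ℝ):ℂ) • d))).re
                = ‖(WithLp.equiv 2 (∀ _ : Fin n, ℂ)).symm (d + ((t:ℂ) • w + ((0:ℝ):ℂ) • d))‖^2 :=
              dot_self_re ((WithLp.equiv 2 (∀ _ : Fin n, ℂ)).symm (d + ((t:ℂ) • w + ((0:ℝ):ℂ) • d)))
            have hmem : (star d ⬝ᵥ d).re + 2*t*(star w ⬝ᵥ d).re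
                + 2*(0:ℝ)*(star d ⬝ᵥ d).re + t^2*(star w ⬝ᵥ w).re
                + 2*(t*(0:ℝ))*(star d ⬝ᵥ w).re + (0:ℝ)^2*(star d ⬝ᵥ d).re ≤ ε^2 := by
              rw [← re_dot_form, hdot]
              nlinarith [hb1, norm_nonneg ((WithLp.equiv 2 (∀ _ : Fin n, ℂ)).symm (d + ((t:ℂ) • w + ((0:ℝ):ℂ) • d))), hε.le]
            have hcon := main w t 0 hmem
            have heq : (2*(star w ⬝ᵥ A *ᵥ (hv + d)).re)*t + ((star w ⬝ᵥ A *ᵥ w).re)*t^2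
                + 0*t^3 + 0*t^4
                = 2*t*(star w ⬝ᵥ A *ᵥ (hv + d)).re + 2*(0:ℝ)*(star d ⬝ᵥ A *ᵥ (hv + d)).re
                  + t^2*(star w ⬝ᵥ A *ᵥ w).re + 2*(t*(0:ℝ))*(star d ⬝ᵥ A *ᵥ w).re
                  + (0:ℝ)^2*(star d ⬝ᵥ A *ᵥ d).re := by ring
            rw [heq]
            exact hcon
          have h2X := lin_coeff_zero _ _ _ _ _ ht0 key
          have hk0 := key _ (le_of_eq (abs_of_pos ht0))
          constructor
          · linarith
          · nlinarith [hk0, h2X, mul_pos ht0 ht0]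
        have hstat : A *ᵥ (hv + d) = (((0:ℝ)):ℂ) • d := by
          have h0 := (stepB (A *ᵥ (hv + d))).1
          have hz := (dot_self_eq_zero_iff _).mp h0
          rw [hz]
          simp
        refine ⟨0, le_refl 0, hstat, fun u => by simpa using (stepB u).2, by ring⟩
    -- the key pointwise inequality, for arbitrary δ
    have KEY : ∀ δ : Fin n → ℂ,
        (star (hv + δ) ⬝ᵥ A *ᵥ (hv + δ)).re + μ*(ε^2 - (star δ ⬝ᵥ δ).re) ≤ c := by
      intro δ
      have hδe : δ = d + (((1:ℝ):ℂ) • (δ - d) + ((0:ℝ):ℂ) • d) := by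
        rw [Complex.ofReal_one, Complex.ofReal_zero, one_smul, zero_smul, add_zero]
        abel
      rw [hδe, ← add_assoc hv d]
      rw [re_form hA, re_dot_form]
      rw [hstat]
      have hvc : (star (hv + d) ⬝ᵥ ((μ:ℝ):ℂ) • d).re ≤ c := by
        rw [← hstat]; exact hvAv_le_c
      simp only [dotProduct_smul, smul_eq_mul, Complex.re_ofReal_mul] at hvc ⊢
      have hp := hpsd (δ - d)
      nlinarith [hp, hslack, hvc]
    -- assemble the PSD certificate
    have hherm : (Matrix.fromBlocks ((μ : ℂ) • (1 : Matrix (Fin n) (Fin n) ℂ) - A)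
        (Matrix.replicateCol (Fin 1) (-(A *ᵥ hv)))
        (Matrix.replicateRow (Fin 1) (-(star (A *ᵥ hv))))
        (Matrix.of fun _ _ => (c : ℂ) - star hv ⬝ᵥ A *ᵥ hv
          - ((μ * ε ^ 2 : ℝ) : ℂ))).IsHermitian := by
      have hsd : star ((μ:ℝ):ℂ) = ((μ:ℝ):ℂ) := by simp [Complex.star_def, Complex.conj_ofReal]
      show _ᴴ = _
      rw [Matrix.fromBlocks_conjTranspose]
      have hB1 : ((μ:ℂ) • (1 : Matrix (Fin n) (Fin n) ℂ) - A)ᴴ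
          = (μ:ℂ) • (1 : Matrix (Fin n) (Fin n) ℂ) - A := by
        rw [Matrix.conjTranspose_sub, Matrix.conjTranspose_smul, Matrix.conjTranspose_one,
          hA.eq, hsd]
      have hB2 : (Matrix.replicateRow (Fin 1) (-(star (A *ᵥ hv))))ᴴ
          = Matrix.replicateCol (Fin 1) (-(A *ᵥ hv)) := by
        rw [Matrix.conjTranspose_replicateRow, star_neg, star_star]
      have hB3 : (Matrix.replicateCol (Fin 1) (-(A *ᵥ hv)))ᴴ
          = Matrix.replicateRow (Fin 1) (-(star (A *ᵥ hv))) := by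
        rw [Matrix.conjTranspose_replicateCol, star_neg]
      have hB4 : (Matrix.of fun _ _ : Fin 1 => (c : ℂ) - star hv ⬝ᵥ A *ᵥ hv
            - ((μ * ε ^ 2 : ℝ) : ℂ))ᴴ
          = Matrix.of fun _ _ : Fin 1 => (c : ℂ) - star hv ⬝ᵥ A *ᵥ hv
            - ((μ * ε ^ 2 : ℝ) : ℂ) := by
        ext i j
        simp only [Matrix.conjTranspose_apply, Matrix.of_apply]
        rw [star_sub, star_sub, conjQ hA]
        simp [Complex.star_def, Complex.conj_ofReal]
      rw [hB1, hB2, hB3, hB4]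
    refine ⟨μ, hμ0, Matrix.PosSemidef.of_dotProduct_mulVec_nonneg hherm ?_⟩
    intro x
    have hx : x = Sum.elim (x ∘ Sum.inl) (fun _ : Fin 1 => x (Sum.inr 0)) := by
      funext i
      cases i with
      | inl a => rfl
      | inr b =>
        have hb0 : b = 0 := Subsingleton.elim _ _
        subst hb0; rfl
    rw [hx]
    have him := imQ hherm (Sum.elim (x ∘ Sum.inl) (fun _ : Fin 1 => x (Sum.inr 0)))
    rw [Complex.le_def]
    constructor
    · simp only [Complex.zero_re]
      have hbf := blockform_re A h μ c ε (x ∘ Sum.inl) (x (Sum.inr 0))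
      rw [← hv_def] at hbf
      rw [hbf]
      by_cases hτ : x (Sum.inr 0) = 0
      · rw [hτ]
        simp only [Complex.normSq_zero, zero_mul, mul_zero, Complex.zero_re, sub_zero, add_zero]
        linarith [hpsd (x ∘ Sum.inl)]
      · have hKs := KEY ((x (Sum.inr 0))⁻¹ • (x ∘ Sum.inl))
        rw [re_form_c hA, dot_smul_self] at hKs
        have hν : 0 < Complex.normSq (x (Sum.inr 0)) := Complex.normSq_pos.mpr hτ
        have hcne : (starRingEnd ℂ) (x (Sum.inr 0)) ≠ 0 := by
          simpa [Complex.star_def] using star_ne_zero.mpr hτ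
        have hτc : ((Complex.normSq (x (Sum.inr 0)) : ℝ):ℂ) * star ((x (Sum.inr 0))⁻¹)
            = x (Sum.inr 0) := by
          rw [Complex.star_def, map_inv₀, ← Complex.mul_conj, mul_assoc,
            mul_inv_cancel₀ hcne, mul_one]
        have hid1 : Complex.normSq (x (Sum.inr 0))
              * (star ((x (Sum.inr 0))⁻¹) * (star (x ∘ Sum.inl) ⬝ᵥ A *ᵥ hv)).re
            = ((x (Sum.inr 0)) * (star (x ∘ Sum.inl) ⬝ᵥ A *ᵥ hv)).re := by
          rw [← Complex.re_ofReal_mul, ← mul_assoc, hτc]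
        have hνσ : Complex.normSq (x (Sum.inr 0)) * Complex.normSq ((x (Sum.inr 0))⁻¹) = 1 := by
          rw [← Complex.normSq_mul, mul_inv_cancel₀ hτ, Complex.normSq_one]
        have hmul := mul_le_mul_of_nonneg_left hKs hν.le
        have e1 : Complex.normSq (x (Sum.inr 0)) * (Complex.normSq ((x (Sum.inr 0))⁻¹)
              * (star (x ∘ Sum.inl) ⬝ᵥ A *ᵥ x ∘ Sum.inl).re)
            = (star (x ∘ Sum.inl) ⬝ᵥ A *ᵥ x ∘ Sum.inl).re := by
          rw [← mul_assoc, hνσ, one_mul]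
        have e2 : Complex.normSq (x (Sum.inr 0)) * (Complex.normSq ((x (Sum.inr 0))⁻¹)
              * (star (x ∘ Sum.inl) ⬝ᵥ x ∘ Sum.inl).re)
            = (star (x ∘ Sum.inl) ⬝ᵥ x ∘ Sum.inl).re := by
          rw [← mul_assoc, hνσ, one_mul]
        have e2m : μ * (Complex.normSq (x (Sum.inr 0)) * (Complex.normSq ((x (Sum.inr 0))⁻¹)
              * (star (x ∘ Sum.inl) ⬝ᵥ x ∘ Sum.inl).re))
            = μ * (star (x ∘ Sum.inl) ⬝ᵥ x ∘ Sum.inl).re := by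
          rw [e2]
        nlinarith [hmul, hid1, e1, e2m]
    · have h0i : (0:ℂ).im = 0 := rfl
      rw [h0i]
      exact him.symm
  · rintro ⟨μ, hμ0, hPSD⟩ δ hδnorm
    have hpos := hPSD.dotProduct_mulVec_nonneg (Sum.elim (δ : Fin n → ℂ) (fun _ : Fin 1 => (1:ℂ)))
    have hre0 := (Complex.le_def.mp hpos).1
    rw [blockform_re A h μ c ε] at hre0
    simp only [Complex.zero_re, Complex.normSq_one, one_mul] at hre0
    have hNδ : (star (δ : Fin n → ℂ) ⬝ᵥ (δ : Fin n → ℂ)).re = ‖δ‖^2 := dot_self_re δ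
    have hNδ_le : (star (δ : Fin n → ℂ) ⬝ᵥ (δ : Fin n → ℂ)).re ≤ ε^2 := by
      rw [hNδ]; nlinarith [norm_nonneg δ]
    have hexp : (star ((h : Fin n → ℂ) + (δ : Fin n → ℂ)) ⬝ᵥ
        A *ᵥ ((h : Fin n → ℂ) + (δ : Fin n → ℂ))).re
        = (star (h : Fin n → ℂ) ⬝ᵥ A *ᵥ (h : Fin n → ℂ)).re
          + 2*(star (1:ℂ) * (star (δ : Fin n → ℂ) ⬝ᵥ A *ᵥ (h : Fin n → ℂ))).re
          + Complex.normSq 1 * (star (δ : Fin n → ℂ) ⬝ᵥ A *ᵥ (δ : Fin n → ℂ)).re := by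
      have h1 : (h : Fin n → ℂ) + (δ : Fin n → ℂ)
          = (h : Fin n → ℂ) + (1:ℂ) • (δ : Fin n → ℂ) := by rw [one_smul]
      rw [h1, re_form_c hA]
    rw [Complex.le_def]
    constructor
    · have hgoal : (star ((h : Fin n → ℂ) + (δ : Fin n → ℂ)) ⬝ᵥ
          A *ᵥ ((h : Fin n → ℂ) + (δ : Fin n → ℂ))).re ≤ c := by
        rw [hexp]
        simp only [Complex.normSq_one, one_mul, star_one]
        nlinarith [hre0, hNδ_le, hμ0]
      simpa using hgoal
    · rw [Complex.ofReal_im]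
      exact imQ hA ((h : Fin n → ℂ) + (δ : Fin n → ℂ))
end

section
/- (Complementary slackness forces rank at most one.) Let ĥ ∈ ℂⁿ, let H̄ = [Iₙ ĥ] be the n×(n+1) complex matrix whose first n columns form the identity matrix Iₙ and whose last column is ĥ, let μ and c be real scalars, and let Λ(μ, c) be the (n+1)×(n+1) block-diagonal matrix with upper-left block μIₙ and lower-right scalar c. Let M be an n×n complex matrix and Ψ an (n+1)×(n+1) complex matrix satisfying Λ(μ, c) Ψ + H̄ᴴ M H̄ Ψ = 0, and suppose the matrix μIₙ + M is invertible. Then rank(H̄ Ψ H̄ᴴ) ≤ 1. -/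
open Matrix

/-- **Complementary slackness forces rank at most one.**
Let `H̄ = [Iₙ  ĥ]`, `Λ(μ, c)` the block-diagonal matrix with blocks `μIₙ` and `c`,
suppose `Λ(μ, c) Ψ + H̄ᴴ M H̄ Ψ = 0` and `μIₙ + M` is invertible.  Then
`rank (H̄ Ψ H̄ᴴ) ≤ 1`. -/
theorem kkt_rank_le_one (n : ℕ) (h : Fin n → ℂ)
    (μ c : ℝ) (M : Matrix (Fin n) (Fin n) ℂ)
    (Ψ : Matrix (Fin n ⊕ Fin 1) (Fin n ⊕ Fin 1) ℂ)
    (hkkt :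
      Matrix.fromBlocks ((μ : ℂ) • (1 : Matrix (Fin n) (Fin n) ℂ)) 0 0
          (Matrix.of fun _ _ => (c : ℂ)) * Ψ +
        (Matrix.fromCols (1 : Matrix (Fin n) (Fin n) ℂ) (Matrix.replicateCol (Fin 1) h))ᴴ * M *
          Matrix.fromCols (1 : Matrix (Fin n) (Fin n) ℂ) (Matrix.replicateCol (Fin 1) h) * Ψ = 0)
    (hinv : IsUnit ((μ : ℂ) • (1 : Matrix (Fin n) (Fin n) ℂ) + M)) :
    (Matrix.fromCols (1 : Matrix (Fin n) (Fin n) ℂ) (Matrix.replicateCol (Fin 1) h) * Ψ *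
        (Matrix.fromCols (1 : Matrix (Fin n) (Fin n) ℂ) (Matrix.replicateCol (Fin 1) h))ᴴ).rank ≤ 1 := by
  set A : Matrix (Fin n) (Fin n ⊕ Fin 1) ℂ :=
    Matrix.fromCols (1 : Matrix (Fin n) (Fin n) ℂ) (Matrix.replicateCol (Fin 1) h) with hA
  set Λ : Matrix (Fin n ⊕ Fin 1) (Fin n ⊕ Fin 1) ℂ :=
    Matrix.fromBlocks ((μ : ℂ) • (1 : Matrix (Fin n) (Fin n) ℂ)) 0 0
      (Matrix.of fun _ _ => (c : ℂ)) with hΛ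
  set Ψb : Matrix (Fin 1) (Fin n ⊕ Fin 1) ℂ := Matrix.of fun _ k => Ψ (Sum.inr 0) k with hΨb
  -- A * Ψ entrywise
  have hAΨ : ∀ i k, (A * Ψ) i k = Ψ (Sum.inl i) k + h i * Ψ (Sum.inr 0) k := by
    intro i k
    simp [hA, Matrix.mul_apply, Fintype.sum_sum_type, Matrix.fromCols,
      Matrix.one_apply, Finset.sum_ite_eq, Finset.sum_ite_eq', Fin.sum_univ_one, ite_mul]
  -- top-row part of the KKT equation
  have htop : ∀ i k, (μ : ℂ) * Ψ (Sum.inl i) k + (M * (A * Ψ)) i k = 0 := by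
    intro i k
    have h0 := congrFun (congrFun hkkt (Sum.inl i)) k
    have h1 : (Λ * Ψ) (Sum.inl i) k = (μ : ℂ) * Ψ (Sum.inl i) k := by
      simp [hΛ, Matrix.mul_apply, Fintype.sum_sum_type, Matrix.fromBlocks,
        Matrix.one_apply, Finset.sum_ite_eq, Finset.sum_ite_eq', ite_mul, mul_ite]
    have h2 : (Aᴴ * M * A * Ψ) (Sum.inl i) k = (M * (A * Ψ)) i k := by
      rw [Matrix.mul_assoc, Matrix.mul_assoc]
      rw [Matrix.mul_apply]
      have hrow : ∀ j : Fin n, Aᴴ (Sum.inl i) j = if j = i then 1 else 0 := by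
        intro j
        simp [hA, Matrix.conjTranspose_apply, Matrix.fromCols, Matrix.one_apply,
          apply_ite (star : ℂ → ℂ)]
      simp only [hrow, ite_mul, one_mul, zero_mul, Finset.sum_ite_eq', Finset.mem_univ,
        if_true]
    rw [Matrix.add_apply, h1, h2, Matrix.zero_apply] at h0
    exact h0
  -- key identity
  have key : ((μ : ℂ) • (1 : Matrix (Fin n) (Fin n) ℂ) + M) * (A * Ψ) =
      Matrix.replicateCol (Fin 1) (fun i => (μ : ℂ) * h i) * Ψb := by
    ext i k
    have e1 : (((μ : ℂ) • (1 : Matrix (Fin n) (Fin n) ℂ) + M) * (A * Ψ)) i k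
        = (μ : ℂ) * (A * Ψ) i k + (M * (A * Ψ)) i k := by
      rw [Matrix.add_mul, Matrix.smul_mul, Matrix.one_mul]
      simp [Matrix.add_apply, Matrix.smul_apply]
    rw [e1, hAΨ i k]
    have e2 : (Matrix.replicateCol (Fin 1) (fun i => (μ : ℂ) * h i) * Ψb) i k
        = (μ : ℂ) * h i * Ψ (Sum.inr 0) k := by
      simp [Matrix.mul_apply, Matrix.replicateCol, hΨb, Fin.sum_univ_one]
    rw [e2]
    linear_combination htop i k
  have hdet : IsUnit ((μ : ℂ) • (1 : Matrix (Fin n) (Fin n) ℂ) + M).det :=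
    (Matrix.isUnit_iff_isUnit_det _).mp hinv
  have hAeq : A * Ψ = ((μ : ℂ) • (1 : Matrix (Fin n) (Fin n) ℂ) + M)⁻¹ *
      (Matrix.replicateCol (Fin 1) (fun i => (μ : ℂ) * h i) * Ψb) := by
    rw [← key, ← Matrix.mul_assoc, Matrix.nonsing_inv_mul _ hdet, Matrix.one_mul]
  calc (A * Ψ * Aᴴ).rank
      = (((μ : ℂ) • (1 : Matrix (Fin n) (Fin n) ℂ) + M)⁻¹ *
          (Matrix.replicateCol (Fin 1) (fun i => (μ : ℂ) * h i) * (Ψb * Aᴴ))).rank := by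
        rw [hAeq, Matrix.mul_assoc, Matrix.mul_assoc]
    _ ≤ (Matrix.replicateCol (Fin 1) (fun i => (μ : ℂ) * h i) * (Ψb * Aᴴ)).rank :=
        Matrix.rank_mul_le_right _ _
    _ ≤ (Matrix.replicateCol (Fin 1) (fun i => (μ : ℂ) * h i)).rank := Matrix.rank_mul_le_left _ _
    _ ≤ Fintype.card (Fin 1) := Matrix.rank_le_card_width _
    _ = 1 := Fintype.card_fin 1
end

section
/- (Theorem 1, KKT core: existence of a rank-one optimal transmit covariance.) Let n be a positive natural number. Let Q_s and Q_n be n×n positive semidefinite complex matrices with Q_s ≠ 0, let ĥ_b ∈ ℂⁿ, let H̄_b = [Iₙ ĥ_b] be the n×(n+1) matrix whose first n columns form Iₙ and whose last column is ĥ_b, let γ_b ≥ 0, μ_b and c_b be real scalars, and let Λ_b be the (n+1)×(n+1) block-diagonal matrix with upper-left block μ_b Iₙ and lower-right scalar c_b. Suppose: (i) Ψ_b and Φ_s are positive semidefinite complex matrices of sizes (n+1)×(n+1) and n×n, and Σ is an n×n positive definite complex matrix, satisfying the stationarity condition Σ − H̄_b Ψ_b H̄_bᴴ = Φ_s; (ii)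 Φ_s Q_s = 0; (iii) the complementary slackness condition Λ_b Ψ_b + H̄_bᴴ (Q_s − γ_b Q_n) H̄_b Ψ_b = 0 holds; (iv) the matrix μ_b Iₙ + Q_s − γ_b Q_n is positive definite. Then rank(Q_s) = 1. -/
open Matrix ComplexOrder

lemma rank_pos_of_ne_zero {m n : Type*} [Fintype m] [Fintype n] [DecidableEq n]
    (A : Matrix m n ℂ) (h : A ≠ 0) : 0 < A.rank := by
  rcases (Nat.eq_zero_or_pos A.rank).symm with h1 | h1
  · exact h1
  · exfalso; apply h
    rw [Matrix.rank, Submodule.finrank_eq_zero, LinearMap.range_eq_bot] at h1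
    ext i j
    have := congrFun (congrArg (fun f => f (Pi.single j 1)) h1) i
    simpa [Matrix.mulVecLin, Matrix.mulVec_single] using this

lemma corner_mul {m m' : Type*} [Fintype m] [Fintype m'] [DecidableEq m]
    (M : Matrix (m ⊕ m') (m ⊕ m') ℂ) :
    Matrix.fromCols (1 : Matrix m m ℂ) (0 : Matrix m m' ℂ) * M * fromRows (1 : Matrix m m ℂ) (0 : Matrix m' m ℂ) = M.toBlocks₁₁ := by
  ext i j
  simp [mul_apply, Fintype.sum_sum_type, Matrix.fromCols, fromRows_apply_inl, fromRows_apply_inr, one_apply, toBlocks₁₁,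
    Finset.sum_ite_eq, Finset.mul_sum]

/-- **Theorem 1 (KKT core): existence of a rank-one optimal transmit covariance.**
Let `Q_s, Q_n ⪰ 0` with `Q_s ≠ 0`, `H̄_b = [Iₙ  ĥ_b]`, `γ_b ≥ 0`, and let `Λ_b` be the
block-diagonal matrix with blocks `μ_b Iₙ` and `c_b`.  Suppose the KKT conditions
(i) `Σ − H̄_b Ψ_b H̄_bᴴ = Φ_s` with `Ψ_b, Φ_s ⪰ 0` and `Σ ≻ 0`,
(ii) `Φ_s Q_s = 0`,
(iii) `Λ_b Ψ_b + H̄_bᴴ (Q_s − γ_b Q_n) H̄_b Ψ_b = 0`,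
(iv) `μ_b Iₙ + Q_s − γ_b Q_n ≻ 0`
hold.  Then `rank Q_s = 1`. -/
theorem rank_one_optimal_covariance (n : ℕ) (hn : 0 < n)
    (Qs Qn : Matrix (Fin n) (Fin n) ℂ)
    (hQs : Qs.PosSemidef) (hQn : Qn.PosSemidef) (hQs0 : Qs ≠ 0)
    (hb : Fin n → ℂ) (γb μb cb : ℝ) (hγb : 0 ≤ γb)
    (Ψb : Matrix (Fin n ⊕ Fin 1) (Fin n ⊕ Fin 1) ℂ) (hΨb : Ψb.PosSemidef)
    (Φs : Matrix (Fin n) (Fin n) ℂ) (hΦs : Φs.PosSemidef)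
    (S : Matrix (Fin n) (Fin n) ℂ) (hS : S.PosDef)
    (hstat :
      S - Matrix.fromCols (1 : Matrix (Fin n) (Fin n) ℂ) (Matrix.replicateCol (Fin 1) hb) * Ψb *
          (Matrix.fromCols (1 : Matrix (Fin n) (Fin n) ℂ) (Matrix.replicateCol (Fin 1) hb))ᴴ = Φs)
    (hcomp : Φs * Qs = 0)
    (hslack :
      Matrix.fromBlocks ((μb : ℂ) • (1 : Matrix (Fin n) (Fin n) ℂ)) 0 0
          (Matrix.of fun _ _ => (cb : ℂ)) * Ψb +
        (Matrix.fromCols (1 : Matrix (Fin n) (Fin n) ℂ) (Matrix.replicateCol (Fin 1) hb))ᴴ *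
          (Qs - (γb : ℂ) • Qn) *
          Matrix.fromCols (1 : Matrix (Fin n) (Fin n) ℂ) (Matrix.replicateCol (Fin 1) hb) * Ψb = 0)
    (hposdef : ((μb : ℂ) • (1 : Matrix (Fin n) (Fin n) ℂ) + Qs - (γb : ℂ) • Qn).PosDef) :
    Qs.rank = 1 := by
  classical
  set H : Matrix (Fin n) (Fin n ⊕ Fin 1) ℂ :=
    Matrix.fromCols (1 : Matrix (Fin n) (Fin n) ℂ) (Matrix.replicateCol (Fin 1) hb) with hH
  set A : Matrix (Fin n) (Fin n) ℂ := Qs - (γb : ℂ) • Qn with hA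
  set M : Matrix (Fin n ⊕ Fin 1) (Fin n ⊕ Fin 1) ℂ :=
    Matrix.fromBlocks ((μb : ℂ) • (1 : Matrix (Fin n) (Fin n) ℂ)) 0 0
      (Matrix.of fun _ _ => (cb : ℂ)) + Hᴴ * A * H with hM
  -- M * Ψb = 0
  have hMΨ : M * Ψb = 0 := by
    rw [hM, add_mul]
    exact hslack
  -- top-left block of M
  have hM11 : M.toBlocks₁₁ = (μb : ℂ) • (1 : Matrix (Fin n) (Fin n) ℂ) + A := by
    rw [hM, hH, Matrix.conjTranspose_fromCols_eq_fromRows_conjTranspose, conjTranspose_one,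
      Matrix.fromRows_mul, Matrix.fromRows_mul_fromCols]
    ext i j
    simp [Matrix.toBlocks₁₁, Matrix.fromBlocks]
  -- μ•1 + A is positive definite
  have hpd : ((μb : ℂ) • (1 : Matrix (Fin n) (Fin n) ℂ) + A).PosDef := by
    rwa [hA, ← add_sub_assoc]
  -- rank M ≥ n
  have hrankM : n ≤ M.rank := by
    have h1 : ((μb : ℂ) • (1 : Matrix (Fin n) (Fin n) ℂ) + A).rank = n := by
      rw [Matrix.rank_of_isUnit _ hpd.isUnit, Fintype.card_fin]
    calc n = (Matrix.fromCols (1 : Matrix (Fin n) (Fin n) ℂ) (0 : Matrix (Fin n) (Fin 1) ℂ) * M *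
            fromRows (1 : Matrix (Fin n) (Fin n) ℂ) (0 : Matrix (Fin 1) (Fin n) ℂ)).rank := by
            rw [corner_mul, hM11, h1]
      _ ≤ (Matrix.fromCols (1 : Matrix (Fin n) (Fin n) ℂ) (0 : Matrix (Fin n) (Fin 1) ℂ) * M).rank :=
            Matrix.rank_mul_le_left _ _
      _ ≤ M.rank := Matrix.rank_mul_le_right _ _
  -- rank Ψb ≤ 1
  have hrankΨ : Ψb.rank ≤ 1 := by
    have := Matrix.rank_add_rank_le_card_of_mul_eq_zero hMΨ
    simp only [Fintype.card_sum, Fintype.card_fin] at this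
    omega
  -- S * Qs = H * Ψb * Hᴴ * Qs
  have hSQ : S * Qs = H * Ψb * Hᴴ * Qs := by
    have h0 : (S - H * Ψb * Hᴴ) * Qs = 0 := by rw [hstat]; exact hcomp
    rw [sub_mul, sub_eq_zero] at h0
    exact h0
  -- rank Qs ≤ 1
  have hle : Qs.rank ≤ 1 := by
    calc Qs.rank = (S * Qs).rank :=
          (Matrix.rank_mul_eq_right_of_isUnit_det S Qs hS.det_pos.ne'.isUnit).symm
      _ = (H * Ψb * Hᴴ * Qs).rank := by rw [hSQ]
      _ ≤ (H * Ψb * Hᴴ).rank := Matrix.rank_mul_le_left _ _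
      _ ≤ (H * Ψb).rank := Matrix.rank_mul_le_left _ _
      _ ≤ Ψb.rank := Matrix.rank_mul_le_right _ _
      _ ≤ 1 := hrankΨ
  have hge : 0 < Qs.rank := rank_pos_of_ne_zero Qs hQs0
  omega
end
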